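/- arXiv:2505.02117 — 6 statements merged into one kernel-verified Lean document; each statement's English description precedes it below -/
import Mathlib

section
/- Let m ≥ 1 be a natural number and let u ∈ ℂ[[z]] be the formal power series u(z) = e^{iπ/m} z + z^{2m+1}. Then there is no formal power series g ∈ ℂ[[z]] with zero constant coefficient such that g(g(z)) = u(z), i.e., u has no formal iterative square root. In particular, the germ u is not in the image of any formal one-parameter flow with φ^1 = u. -/
/-- Substitution (composition) of formal power series: `substComp g f = f(g(z))`.
For `g` with zero constant coefficient this agrees with Mathlib's `PowerSeries.subst g f`:
the `n`-th coefficient only depends on the terms of `f` of degree `≤ n`. -/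
noncomputable def PowerSeries.substComp {R : Type*} [CommRing R] (g f : PowerSeries R) :
    PowerSeries R :=
  PowerSeries.mk fun n => PowerSeries.coeff n (Polynomial.aeval g (PowerSeries.trunc (n + 1) f))

lemma my_coeff_substComp (g : PowerSeries ℂ) (n : ℕ) :
    PowerSeries.coeff n (PowerSeries.substComp g g)
      = ∑ k ∈ Finset.range (n+1),
          PowerSeries.coeff k g * PowerSeries.coeff n (g ^ k) := by
  rw [PowerSeries.substComp, PowerSeries.coeff_mk, PowerSeries.trunc_apply, map_sum, map_sum,
    ← Finset.range_eq_Ico]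
  refine Finset.sum_congr rfl fun k _ => ?_
  rw [Polynomial.aeval_monomial, ← PowerSeries.C_eq_algebraMap, PowerSeries.coeff_C_mul]

lemma my_coeff_eq_zero {f : PowerSeries ℂ} {n N : ℕ} (h : (PowerSeries.X : PowerSeries ℂ) ^ N ∣ f)
    (hn : n < N) : PowerSeries.coeff n f = 0 :=
  PowerSeries.X_pow_dvd_iff.mp h n hn

lemma my_coeff_pow_self (g : PowerSeries ℂ) (c : ℂ) (n : ℕ) (hn : 2 ≤ n)
    (hdvd : (PowerSeries.X : PowerSeries ℂ) ^ n ∣ (g - PowerSeries.C c * PowerSeries.X)) :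
    PowerSeries.coeff n (g ^ n) = c ^ n := by
  obtain ⟨r, hr⟩ := hdvd
  have hg : g = PowerSeries.C c * PowerSeries.X + PowerSeries.X ^ n * r := by
    rw [← hr]; ring
  rw [hg, add_pow, map_sum, Finset.sum_eq_single n]
  · simp [mul_pow, ← map_pow, PowerSeries.coeff_C_mul, PowerSeries.coeff_X_pow]
  · intro k hk hkn
    have hk' : k < n := lt_of_le_of_ne (Nat.lt_succ_iff.mp (Finset.mem_range.mp hk)) hkn
    apply my_coeff_eq_zero (N := n + 1) ?_ (Nat.lt_succ_self n)
    have hle : n + 1 ≤ k + n * (n - k) := by nlinarith [Nat.sub_add_cancel hk'.le, hk'.le, hn]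
    refine dvd_trans (pow_dvd_pow _ hle) (Dvd.dvd.mul_right ?_ _)
    rw [pow_add]
    exact mul_dvd_mul (pow_dvd_pow_of_dvd (dvd_mul_left _ _) k)
      (by rw [mul_pow, ← pow_mul]; exact dvd_mul_right _ _)
  · intro h; exact absurd (Finset.mem_range.mpr (Nat.lt_succ_self n)) h

lemma coeff_substComp_formula (g : PowerSeries ℂ) (c : ℂ) (n : ℕ) (hn : 2 ≤ n)
    (h0 : PowerSeries.coeff 0 g = 0) (h1 : PowerSeries.coeff 1 g = c)
    (hdvd : (PowerSeries.X : PowerSeries ℂ) ^ n ∣ (g - PowerSeries.C c * PowerSeries.X)) :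
    PowerSeries.coeff n (PowerSeries.substComp g g)
      = PowerSeries.coeff n g * (c + c ^ n) := by
  have hmid : ∀ k, 2 ≤ k → k < n → PowerSeries.coeff k g = 0 := by
    intro k h2 hk
    have h := my_coeff_eq_zero hdvd hk
    rwa [map_sub, PowerSeries.coeff_C_mul, PowerSeries.coeff_X, if_neg (by omega), mul_zero,
      sub_zero] at h
  rw [my_coeff_substComp,
    ← Finset.sum_subset (show ({1, n} : Finset ℕ) ⊆ Finset.range (n+1) by
      intro x hx; simp only [Finset.mem_insert, Finset.mem_singleton] at hx
      rcases hx with h|h <;> simp [h] <;> omega)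
      (fun k hk hknot => ?_)]
  · rw [Finset.sum_insert (by simp; omega), Finset.sum_singleton, pow_one, h1,
      my_coeff_pow_self g c n hn hdvd]
    ring
  · simp only [Finset.mem_insert, Finset.mem_singleton, not_or] at hknot
    rcases Nat.lt_or_ge k 2 with h|h
    · interval_cases k
      · rw [h0, zero_mul]
      · exact absurd rfl hknot.1
    · rw [hmid k h (lt_of_le_of_ne (Nat.lt_succ_iff.mp (Finset.mem_range.mp hk)) hknot.2),
        zero_mul]

/-- For `m ≥ 1` and `u(z) = e^{iπ/m} z + z^{2m+1}`, there is no formal power series `g`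
with zero constant coefficient such that `g(g(z)) = u(z)`. -/
theorem stmt0 (m : ℕ) (hm : 1 ≤ m) (u : PowerSeries ℂ)
    (hu : u = PowerSeries.C (Complex.exp (Complex.I * Real.pi / m)) * PowerSeries.X
        + PowerSeries.X ^ (2 * m + 1)) :
    ¬ ∃ g : PowerSeries ℂ, PowerSeries.constantCoeff g = 0 ∧
        PowerSeries.substComp g g = u := by
  rintro ⟨g, hg0, hgg⟩
  subst hu
  set lam := Complex.exp (Complex.I * Real.pi / m) with hlam
  set c := PowerSeries.coeff 1 g with hc
  have hg0' : PowerSeries.coeff 0 g = 0 := by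
    rw [PowerSeries.coeff_zero_eq_constantCoeff]; exact hg0
  have hm0 : (m:ℂ) ≠ 0 := Nat.cast_ne_zero.mpr (by omega)
  have hcoeffu : ∀ n : ℕ, PowerSeries.coeff n
      (PowerSeries.C lam * PowerSeries.X + PowerSeries.X ^ (2*m+1))
      = (if n = 1 then lam else 0) + (if n = 2*m+1 then 1 else 0) := by
    intro n
    rw [map_add, PowerSeries.coeff_C_mul, PowerSeries.coeff_X, PowerSeries.coeff_X_pow]
    simp
  have h1 : c * c = lam := by
    have h := congrArg (PowerSeries.coeff 1) hgg
    rw [my_coeff_substComp, hcoeffu] at h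
    simpa [Finset.sum_range_succ, hg0', show ¬(1 = 2*m+1) by omega, show ¬ m = 0 by omega] using h
  have hlam0 : lam ≠ 0 := Complex.exp_ne_zero _
  have hc0 : c ≠ 0 := by
    intro h; rw [h, mul_zero] at h1; exact hlam0 h1.symm
  have hlamm : lam ^ m = -1 := by
    rw [hlam, ← Complex.exp_nat_mul,
      show (m:ℂ) * (Complex.I * Real.pi / m) = Real.pi * Complex.I by field_simp]
    exact Complex.exp_pi_mul_I
  have hlampow : ∀ j : ℕ, 1 ≤ j → j < 2*m → lam ^ j ≠ 1 := by
    intro j hj1 hj2 hcontra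
    rw [hlam, ← Complex.exp_nat_mul, Complex.exp_eq_one_iff] at hcontra
    obtain ⟨k, hk⟩ := hcontra
    have hπ : (Real.pi : ℂ) ≠ 0 := by exact_mod_cast Real.pi_ne_zero
    have hI := Complex.I_ne_zero
    have hj : (j:ℂ) = 2*k*m := by
      field_simp at hk
      linear_combination hk
    have hjz : (j:ℤ) = 2*k*m := by exact_mod_cast hj
    have hm' : (1:ℤ) ≤ m := by exact_mod_cast hm
    have hj2' : (j:ℤ) < 2*m := by exact_mod_cast hj2
    have hj1' : (1:ℤ) ≤ j := by exact_mod_cast hj1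
    rcases le_or_gt k 0 with h|h
    · nlinarith
    · nlinarith
  have hstep : ∀ n : ℕ, 2 ≤ n → n ≤ 2*m → PowerSeries.coeff n g = 0 := by
    intro n
    induction n using Nat.strong_induction_on with
    | _ n ih =>
      intro h2 hle
      have hdvd : (PowerSeries.X : PowerSeries ℂ) ^ n
          ∣ (g - PowerSeries.C c * PowerSeries.X) := by
        rw [PowerSeries.X_pow_dvd_iff]
        intro j hj
        rw [map_sub, PowerSeries.coeff_C_mul, PowerSeries.coeff_X]
        by_cases hj1 : j = 1
        · subst hj1; simp [← hc]
        · rw [if_neg hj1, mul_zero, sub_zero]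
          rcases Nat.eq_zero_or_pos j with h0|hpos
          · subst h0; exact hg0'
          · exact ih j hj (by omega) (by omega)
      have hf := coeff_substComp_formula g c n h2 hg0' hc.symm hdvd
      rw [hgg, hcoeffu, if_neg (by omega), if_neg (by omega), zero_add] at hf
      have hne : c + c ^ n ≠ 0 := by
        intro hzero
        have hcn : c ^ (n-1) * c = -1 * c := by
          rw [← pow_succ, show n - 1 + 1 = n by omega]
          linear_combination hzero
        have hcn' : c ^ (n-1) = -1 := mul_right_cancel₀ hc0 hcn
        have hlam1 : lam ^ (n-1) = 1 := by
          calc lam ^ (n-1) = (c ^ (n-1)) ^ 2 := by rw [← h1]; ring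
            _ = 1 := by rw [hcn']; ring
        exact hlampow (n-1) (by omega) (by omega) hlam1
      have := hf.symm
      exact (mul_eq_zero.mp this).resolve_right hne
  have hdvd : (PowerSeries.X : PowerSeries ℂ) ^ (2*m+1)
      ∣ (g - PowerSeries.C c * PowerSeries.X) := by
    rw [PowerSeries.X_pow_dvd_iff]
    intro j hj
    rw [map_sub, PowerSeries.coeff_C_mul, PowerSeries.coeff_X]
    by_cases hj1 : j = 1
    · subst hj1; simp [← hc]
    · rw [if_neg hj1, mul_zero, sub_zero]
      rcases Nat.eq_zero_or_pos j with h0|hpos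
      · subst h0; exact hg0'
      · exact hstep j (by omega) (by omega)
  have hf := coeff_substComp_formula g c (2*m+1) (by omega) hg0' hc.symm hdvd
  rw [hgg, hcoeffu, if_neg (by omega), if_pos rfl, zero_add] at hf
  have hcpow : c ^ (2*m+1) = -c := by
    have h2m : c ^ (2*m) = -1 := by
      calc c ^ (2*m) = (c * c) ^ m := by ring
        _ = -1 := by rw [h1, hlamm]
    rw [pow_succ, h2m]; ring
  rw [hcpow] at hf
  simp at hf
end

section
/- Let m ≥ 1 and let u(z) = e^{iπ/m} z + z^{2m+1} ∈ ℂ[[z]]. If g ∈ ℂ[[z]] has zero constant coefficient and satisfies g(g(z)) = u(z), then coeffⱼ(g) = 0 for every j with 2 ≤ j ≤ 2m. -/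
lemma coeff_substComp {R : Type*} [CommRing R] (g f : PowerSeries R) (n : ℕ) :
    PowerSeries.coeff n (PowerSeries.substComp g f)
      = ∑ d ∈ Finset.range (n + 1), PowerSeries.coeff d f * PowerSeries.coeff n (g ^ d) := by
  have hdeg : (PowerSeries.trunc (n + 1) f).natDegree < n + 1 :=
    PowerSeries.natDegree_trunc_lt f n
  rw [PowerSeries.substComp, PowerSeries.coeff_mk, Polynomial.aeval_def,
    Polynomial.eval₂_eq_sum_range' _ hdeg, map_sum]
  refine Finset.sum_congr rfl fun d hd => ?_
  rw [PowerSeries.coeff_trunc, if_pos (Finset.mem_range.mp hd)]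
  have : (algebraMap R (PowerSeries R)) (PowerSeries.coeff d f)
      = PowerSeries.C (PowerSeries.coeff d f) := rfl
  rw [this]
  simp [PowerSeries.coeff_C_mul]

lemma coeff_pow_zero_of_lt {R : Type*} [CommRing R] (g : PowerSeries R)
    (hg0 : PowerSeries.constantCoeff g = 0) {k d : ℕ} (h : k < d) :
    PowerSeries.coeff k (g ^ d) = 0 := by
  have hdvd : PowerSeries.X ^ d ∣ g ^ d :=
    pow_dvd_pow_of_dvd (PowerSeries.X_dvd_iff.mpr hg0) d
  exact PowerSeries.X_pow_dvd_iff.mp hdvd k h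

lemma coeff_pow_self {R : Type*} [CommRing R] (g : PowerSeries R)
    (hg0 : PowerSeries.constantCoeff g = 0) (n : ℕ) :
    PowerSeries.coeff n (g ^ n) = (PowerSeries.coeff 1 g) ^ n := by
  induction n with
  | zero => simp
  | succ n ih =>
    rw [pow_succ, PowerSeries.coeff_mul]
    rw [Finset.sum_eq_single_of_mem (n, 1) (by simp [Finset.mem_antidiagonal])]
    · rw [ih]; ring
    · rintro ⟨a, b⟩ hab hne
      rw [Finset.HasAntidiagonal.mem_antidiagonal] at hab
      simp only at *
      rcases lt_trichotomy a n with h | h | h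
      · rw [coeff_pow_zero_of_lt g hg0 h, zero_mul]
      · exact absurd (Prod.ext h (by omega)) hne
      · have hb : b = 0 := by omega
        subst hb
        rw [PowerSeries.coeff_zero_eq_constantCoeff, hg0, mul_zero]

/-- If `g(g(z)) = e^{iπ/m} z + z^{2m+1}` with `g(0) = 0`, then the coefficients of `g`
of degree `j` with `2 ≤ j ≤ 2m` all vanish. -/
theorem stmt2 (m : ℕ) (hm : 1 ≤ m) (u : PowerSeries ℂ)
    (hu : u = PowerSeries.C (Complex.exp (Complex.I * Real.pi / m)) * PowerSeries.X
        + PowerSeries.X ^ (2 * m + 1))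
    (g : PowerSeries ℂ) (hg0 : PowerSeries.constantCoeff g = 0)
    (hgg : PowerSeries.substComp g g = u) :
    ∀ j : ℕ, 2 ≤ j → j ≤ 2 * m → PowerSeries.coeff j g = 0 := by
  set c : ℂ := PowerSeries.coeff 1 g with hc
  set lam : ℂ := Complex.exp (Complex.I * Real.pi / m) with hlam
  -- c ^ 2 = lam
  have hkey : c ^ 2 = lam := by
    have h1 := congrArg (PowerSeries.coeff 1) hgg
    rw [coeff_substComp, hu] at h1
    rw [Finset.sum_range_succ, Finset.sum_range_one] at h1
    simp only [pow_zero, pow_one] at h1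
    rw [PowerSeries.coeff_zero_eq_constantCoeff] at h1
    rw [hg0] at h1
    rw [map_add, PowerSeries.coeff_C_mul, PowerSeries.coeff_one_X, PowerSeries.coeff_X_pow] at h1
    rw [if_neg (by omega)] at h1
    rw [← hc] at h1
    linear_combination h1
  have hlamne : lam ≠ 0 := Complex.exp_ne_zero _
  have hcne : c ≠ 0 := by
    intro h; rw [h] at hkey; simp at hkey; exact hlamne hkey.symm
  -- c + c ^ j ≠ 0 for 2 ≤ j ≤ 2m
  have hfac : ∀ j : ℕ, 2 ≤ j → j ≤ 2 * m → c + c ^ j ≠ 0 := by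
    intro j hj2 hjm hcon
    have h1 : c ^ (j - 1) = -1 := by
      have h2 : c * c ^ (j - 1) = c * (-1) := by
        rw [← pow_succ', show j - 1 + 1 = j by omega]
        linear_combination hcon
      exact mul_left_cancel₀ hcne h2
    have h2 : lam ^ (j - 1) = 1 := by
      have h3 := congrArg (· ^ 2) h1
      simp only [← pow_mul] at h3
      rw [mul_comm (j - 1) 2, pow_mul, hkey] at h3
      simpa using h3
    rw [hlam, ← Complex.exp_nat_mul, Complex.exp_eq_one_iff] at h2
    obtain ⟨n, hn⟩ := h2
    have hπ : (Real.pi : ℂ) ≠ 0 := Complex.ofReal_ne_zero.mpr Real.pi_ne_zero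
    have hmne : (m : ℂ) ≠ 0 := Nat.cast_ne_zero.mpr (by omega)
    have hI : Complex.I ≠ 0 := Complex.I_ne_zero
    have hn' : ((j : ℂ) - 1) * (Complex.I * Real.pi)
        = (n : ℂ) * (2 * Real.pi * Complex.I) * m := by
      field_simp at hn
      rw [Nat.cast_sub (by omega : 1 ≤ j), Nat.cast_one] at hn
      linear_combination (Complex.I * Real.pi) * hn
    have hcancel : ((j : ℂ) - 1) = 2 * (n : ℂ) * m := by
      have h3 : ((j : ℂ) - 1) * (Complex.I * Real.pi)
          = (2 * (n : ℂ) * m) * (Complex.I * Real.pi) := by linear_combination hn'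
      exact mul_right_cancel₀ (mul_ne_zero hI hπ) h3
    have hjz : (j : ℤ) - 1 = 2 * n * m := by
      have : (((j : ℤ) - 1 : ℤ) : ℂ) = ((2 * n * m : ℤ) : ℂ) := by
        push_cast
        linear_combination hcancel
      exact_mod_cast this
    have hm' : (1 : ℤ) ≤ m := by exact_mod_cast hm
    have h0 : (0 : ℤ) < 2 * n * m := by omega
    have h2m : 2 * n * (m : ℤ) < 2 * m := by omega
    rcases le_or_gt n 0 with hn0 | hn0
    · have : n * (m : ℤ) ≤ 0 := mul_nonpos_of_nonpos_of_nonneg hn0 (by positivity)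
      linarith
    · have hn1 : (1 : ℤ) ≤ n := hn0
      nlinarith
  -- main induction
  intro j
  induction j using Nat.strong_induction_on with
  | _ j ih =>
    intro hj2 hjm
    have h1 := congrArg (PowerSeries.coeff j) hgg
    rw [coeff_substComp, hu] at h1
    have hrhs : PowerSeries.coeff j (PowerSeries.C lam * PowerSeries.X
        + PowerSeries.X ^ (2 * m + 1)) = 0 := by
      rw [map_add, PowerSeries.coeff_C_mul, PowerSeries.coeff_X, PowerSeries.coeff_X_pow]
      rw [if_neg (by omega), if_neg (by omega)]
      ring
    rw [hrhs] at h1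
    have hsum : ∑ d ∈ Finset.range (j + 1),
        PowerSeries.coeff d g * PowerSeries.coeff j (g ^ d)
        = c * PowerSeries.coeff j g + PowerSeries.coeff j g * c ^ j := by
      rw [← Finset.sum_subset (s₁ := ({1, j} : Finset ℕ))
        (by
          intro x hx
          simp only [Finset.mem_insert, Finset.mem_singleton] at hx
          rcases hx with h | h <;> (subst h; exact Finset.mem_range.mpr (by omega)))
        (fun d hd hdn => ?_)]
      · rw [Finset.sum_pair (by omega : (1 : ℕ) ≠ j)]
        rw [pow_one, coeff_pow_self g hg0, ← hc]
      · simp only [Finset.mem_insert, Finset.mem_singleton, not_or] at hdn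
        rcases Nat.lt_or_ge d 2 with h | h
        · have hd0 : d = 0 := by omega
          subst hd0
          rw [PowerSeries.coeff_zero_eq_constantCoeff, hg0, zero_mul]
        · have hdj : d < j := by
            have := Finset.mem_range.mp hd; omega
          rw [ih d hdj h (by omega), zero_mul]
    rw [hsum] at h1
    have hfin : PowerSeries.coeff j g * (c + c ^ j) = 0 := by linear_combination h1
    rcases mul_eq_zero.mp hfin with h | h
    · exact h
    · exact absurd h (hfac j hj2 hjm)
end

section
/- (Koenigs) Let u : ℂ → ℂ be analytic at 0 with u(0) = 0 and multiplier λ = u'(0) satisfying 0 < |λ| < 1. Then there exists a function f : ℂ → ℂ analytic at 0 with f(0) = 0 and f'(0) = 1 such that f(u(z)) = λ · f(z) for all z in some neighborhood of 0; i.e., u is locally conjugate to its linear part z ↦ λz. -/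
open Filter

set_option maxHeartbeats 1000000

/-- (Koenigs) If `u` is analytic at `0`, `u 0 = 0`, and its multiplier `λ = u'(0)` satisfies
`0 < |λ| < 1`, then `u` is locally analytically conjugate to its linear part: there is `f`
analytic at `0` with `f 0 = 0`, `f'(0) = 1`, and `f(u(z)) = λ f(z)` near `0`. -/
theorem stmt8 (u : ℂ → ℂ) (hu : AnalyticAt ℂ u 0) (hu0 : u 0 = 0)
    (h1 : 0 < ‖deriv u 0‖) (h2 : ‖deriv u 0‖ < 1) :
    ∃ f : ℂ → ℂ, AnalyticAt ℂ f 0 ∧ f 0 = 0 ∧ deriv f 0 = 1 ∧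
      ∀ᶠ z in nhds (0 : ℂ), f (u z) = deriv u 0 * f z := by
  set l : ℂ := deriv u 0 with hldef
  set a : ℝ := ‖l‖ with hadef
  have ha0 : 0 < a := by simpa [hadef] using h1
  have ha1 : a < 1 := by simpa [hadef] using h2
  have hlne : l ≠ 0 := by
    intro hh; rw [hadef, hh] at ha0; simp at ha0
  clear_value l
  clear_value a
  have hud : DifferentiableAt ℂ u 0 := hu.differentiableAt
  -- quadratic factorization of the nonlinear part
  obtain ⟨h, hha, hkey⟩ : ∃ h : ℂ → ℂ, AnalyticAt ℂ h 0 ∧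
      ∀ z : ℂ, u z = l * z + z * (z * h z) := by
    set v : ℂ → ℂ := fun z => u z - l * z with hvdef
    have hv0 : v 0 = 0 := by simp [hvdef, hu0]
    have hdv : deriv v 0 = 0 := by
      have h' : HasDerivAt v (deriv u 0 - l * 1) 0 := by
        exact (hud.hasDerivAt.sub ((hasDerivAt_id (0 : ℂ)).const_mul l))
      rw [h'.deriv, ← hldef]; ring
    obtain ⟨p, hp⟩ : AnalyticAt ℂ v 0 := hu.sub (analyticAt_const.mul analyticAt_id)
    refine ⟨dslope (dslope v 0) 0,
      ⟨_, (hp.has_fpower_series_dslope_fslope).has_fpower_series_dslope_fslope⟩, fun z => ?_⟩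
    have hg0 : dslope v 0 0 = 0 := by simp [dslope_same, hdv]
    have h1' : (z - 0) • dslope v 0 z = v z - v 0 := sub_smul_dslope v 0 z
    have h2' : (z - 0) • dslope (dslope v 0) 0 z = dslope v 0 z - dslope v 0 0 :=
      sub_smul_dslope (dslope v 0) 0 z
    rw [sub_zero, smul_eq_mul] at h1' h2'
    rw [hv0, sub_zero] at h1'
    rw [hg0, sub_zero] at h2'
    calc u z = l * z + v z := by rw [hvdef]; ring
      _ = l * z + z * (z * dslope (dslope v 0) 0 z) := by rw [h2', h1']
  -- bound on h near 0
  set C : ℝ := ‖h 0‖ + 1 with hCdef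
  have hC0 : 0 < C := by positivity
  obtain ⟨r₁, hr₁, hhb⟩ : ∃ r₁ > 0, ∀ z : ℂ, ‖z‖ ≤ r₁ → ‖h z‖ ≤ C := by
    have hcont := hha.continuousAt
    rw [Metric.continuousAt_iff] at hcont
    obtain ⟨δ, hδ, hδ'⟩ := hcont 1 one_pos
    refine ⟨δ / 2, by positivity, fun z hz => ?_⟩
    have hd : dist z 0 < δ := by
      simp only [dist_zero_right]; linarith
    have := hδ' hd
    rw [dist_eq_norm] at this
    calc ‖h z‖ = ‖h z - h 0 + h 0‖ := by ring_nf
      _ ≤ ‖h z - h 0‖ + ‖h 0‖ := norm_add_le _ _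
      _ ≤ C := by rw [hCdef]; linarith
  clear_value C
  -- differentiability near 0
  obtain ⟨r₀, hr₀, hud'⟩ : ∃ r₀ > 0, ∀ z : ℂ, ‖z‖ < r₀ → DifferentiableAt ℂ u z := by
    have hev := hu.eventually_analyticAt
    rw [Metric.eventually_nhds_iff] at hev
    obtain ⟨δ, hδ, hδ'⟩ := hev
    exact ⟨δ, hδ, fun z hz => (hδ' (by simpa [dist_zero_right] using hz)).differentiableAt⟩
  -- choice of radius and contraction constant
  obtain ⟨s, hs0, hs2, has, hs1⟩ : ∃ s : ℝ, 0 < s ∧ s ^ 2 = a ∧ a < s ∧ s < 1 := by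
    refine ⟨Real.sqrt a, Real.sqrt_pos.mpr ha0, Real.sq_sqrt ha0.le, ?_, ?_⟩
    · nlinarith [Real.sq_sqrt ha0.le, Real.sqrt_pos.mpr ha0]
    · nlinarith [Real.sq_sqrt ha0.le, Real.sqrt_pos.mpr ha0]
  set ε : ℝ := (s - a) / 2 with hεdef
  clear_value ε
  have hε0 : 0 < ε := by rw [hεdef]; linarith
  set r : ℝ := min (r₀ / 2) (min r₁ (ε / C)) with hrdef
  have hr0 : 0 < r := by
    rw [hrdef]; simp only [lt_min_iff]
    refine ⟨by linarith, hr₁, by positivity⟩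
  have hrr₀ : r < r₀ := lt_of_le_of_lt (min_le_left _ _) (by linarith)
  have hrr₁ : r ≤ r₁ := le_trans (min_le_right _ _) (min_le_left _ _)
  have hrε : C * r ≤ ε := by
    have hle : r ≤ ε / C := le_trans (min_le_right _ _) (min_le_right _ _)
    calc C * r ≤ C * (ε / C) := by nlinarith
      _ = ε := by field_simp
  clear_value r
  set c : ℝ := a + C * r with hcdef
  have hc0 : 0 < c := by rw [hcdef]; positivity
  have hcs : c < s := by
    have h' : C * r ≤ ε := hrε
    rw [hεdef] at h'
    rw [hcdef]; linarith
  have hc1 : c < 1 := lt_trans hcs hs1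
  have hc2 : c ^ 2 < a := by nlinarith
  clear_value c
  -- the basic contraction estimate
  have hmap : ∀ z : ℂ, ‖z‖ ≤ r → ‖u z‖ ≤ c * ‖z‖ := by
    intro z hz
    have hhz : ‖h z‖ ≤ C := hhb z (le_trans hz hrr₁)
    calc ‖u z‖ ≤ ‖l * z‖ + ‖z * (z * h z)‖ := by rw [hkey z]; exact norm_add_le _ _
      _ = a * ‖z‖ + ‖z‖ * (‖z‖ * ‖h z‖) := by simp [norm_mul, hadef]
      _ ≤ a * ‖z‖ + ‖z‖ * (r * C) := by
          have h3 : ‖z‖ * ‖h z‖ ≤ r * C := mul_le_mul hz hhz (norm_nonneg _) hr0.le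
          have h4 := mul_le_mul_of_nonneg_left h3 (norm_nonneg z)
          linarith
      _ = c * ‖z‖ := by rw [hcdef]; ring
  have hiter : ∀ n : ℕ, ∀ z : ℂ, ‖z‖ ≤ r → ‖u^[n] z‖ ≤ c ^ n * ‖z‖ := by
    intro n
    induction n with
    | zero => intro z hz; simp
    | succ n ih =>
      intro z hz
      have h1' := ih z hz
      have hcn1 : c ^ n ≤ 1 := pow_le_one₀ hc0.le hc1.le
      have h2' : ‖u^[n] z‖ ≤ r := by nlinarith [norm_nonneg z]
      rw [Function.iterate_succ_apply']
      calc ‖u (u^[n] z)‖ ≤ c * ‖u^[n] z‖ := hmap _ h2'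
        _ ≤ c * (c ^ n * ‖z‖) := by nlinarith
        _ = c ^ (n + 1) * ‖z‖ := by ring
  have hin : ∀ n : ℕ, ∀ z : ℂ, ‖z‖ ≤ r → ‖u^[n] z‖ ≤ r := by
    intro n z hz
    have hcn1 : c ^ n ≤ 1 := pow_le_one₀ hc0.le hc1.le
    nlinarith [hiter n z hz, norm_nonneg z]
  have hfix : ∀ n : ℕ, u^[n] 0 = 0 := by
    intro n; induction n with
    | zero => simp
    | succ n ih => rw [Function.iterate_succ_apply', ih, hu0]
  -- the approximating sequence
  set F : ℕ → ℂ → ℂ := fun n z => u^[n] z / l ^ n with hFdef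
  clear_value F
  set G : ℕ → ℂ → ℂ := fun n z => F (n + 1) z - F n z with hGdef
  clear_value G
  set q : ℝ := c ^ 2 / a with hqdef
  have hq0 : 0 ≤ q := by rw [hqdef]; positivity
  have hq1 : q < 1 := by rw [hqdef, div_lt_one ha0]; exact hc2
  set M : ℝ := C * r ^ 2 / a with hMdef
  have hGbound : ∀ n : ℕ, ∀ z : ℂ, z ∈ Metric.closedBall (0 : ℂ) r → ‖G n z‖ ≤ M * q ^ n := by
    intro n z hz
    rw [Metric.mem_closedBall, dist_zero_right] at hz
    have hw : ‖u^[n] z‖ ≤ c ^ n * ‖z‖ := hiter n z hz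
    have hwr : ‖u^[n] z‖ ≤ r := hin n z hz
    have hG : G n z = (u^[n] z * (u^[n] z * h (u^[n] z))) / l ^ (n + 1) := by
      have hln : (l : ℂ) ^ n ≠ 0 := pow_ne_zero _ hlne
      rw [hGdef, hFdef]
      simp only
      rw [Function.iterate_succ_apply', hkey (u^[n] z), pow_succ]
      field_simp
      ring
    have hhw : ‖h (u^[n] z)‖ ≤ C := hhb _ (le_trans hwr hrr₁)
    have hvw : ‖u^[n] z * (u^[n] z * h (u^[n] z))‖ ≤ C * (c ^ n * r) ^ 2 := by
      rw [norm_mul, norm_mul]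
      have h1' : ‖u^[n] z‖ ≤ c ^ n * r := by
        calc ‖u^[n] z‖ ≤ c ^ n * ‖z‖ := hw
          _ ≤ c ^ n * r := by nlinarith [pow_nonneg hc0.le n]
      have hn0 : (0:ℝ) ≤ ‖u^[n] z‖ := norm_nonneg _
      have hcn : (0:ℝ) ≤ c ^ n * r := by positivity
      have hsq : ‖u^[n] z‖ * ‖u^[n] z‖ ≤ (c ^ n * r) * (c ^ n * r) :=
        mul_le_mul h1' h1' hn0 hcn
      nlinarith [mul_le_mul hsq hhw (norm_nonneg (h (u^[n] z))) (mul_nonneg hcn hcn)]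
    rw [hG, norm_div, norm_pow]
    rw [div_le_iff₀ (by positivity : (0:ℝ) < ‖l‖ ^ (n+1))]
    calc ‖u^[n] z * (u^[n] z * h (u^[n] z))‖ ≤ C * (c ^ n * r) ^ 2 := hvw
      _ = (C * r ^ 2 / a) * (c ^ 2 / a) ^ n * (a * a ^ n) := by
          rw [div_pow]; field_simp; ring
      _ = M * q ^ n * ‖l‖ ^ (n + 1) := by
          rw [hMdef, hqdef, ← hadef, pow_succ]; ring
  clear_value M
  have hsum : Summable (fun n : ℕ => M * q ^ n) :=
    (summable_geometric_of_lt_one hq0 hq1).mul_left M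
  -- uniform convergence of partial sums on the closed ball
  have huf0 := tendstoUniformlyOn_tsum_nat hsum hGbound
  set f : ℂ → ℂ := fun z => z + ∑' n, G n z with hfdef
  clear_value f
  have htel : ∀ N : ℕ, ∀ z : ℂ, z + ∑ n ∈ Finset.range N, G n z = F N z := by
    intro N z
    have hts := Finset.sum_range_sub (fun n => F n z) N
    rw [hGdef]
    simp only at hts ⊢
    rw [hts, hFdef]
    simp
  have hid : TendstoUniformlyOn (fun (_ : ℕ) (z : ℂ) => z) (fun z => z) atTop
      (Metric.closedBall (0 : ℂ) r) := by
    rw [Metric.tendstoUniformlyOn_iff]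
    intro δ hδ
    filter_upwards with N z hz
    simpa using hδ
  have huf : TendstoUniformlyOn F f atTop (Metric.closedBall (0 : ℂ) r) := by
    rw [hfdef]
    exact (hid.add huf0).congr (by filter_upwards with N using fun z hz => (htel N z))
  have htend : ∀ z ∈ Metric.closedBall (0 : ℂ) r,
      Tendsto (fun N => F N z) atTop (nhds (f z)) := fun z hz => huf.tendsto_at hz
  -- differentiability of the approximants
  have hitdiff : ∀ n : ℕ, ∀ z : ℂ, ‖z‖ < r → DifferentiableAt ℂ (u^[n]) z := by
    intro n
    induction n with
    | zero => intro z _; simpa using differentiableAt_id'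
    | succ n ih =>
      intro z hz
      rw [Function.iterate_succ']
      have h1' : ‖u^[n] z‖ ≤ r := hin n z hz.le
      exact DifferentiableAt.comp z (hud' _ (lt_of_le_of_lt h1' hrr₀)) (ih z hz)
  have hFdiff : ∀ N : ℕ, DifferentiableOn ℂ (F N) (Metric.ball (0 : ℂ) r) := by
    intro N z hz
    rw [Metric.mem_ball, dist_zero_right] at hz
    rw [hFdef]
    exact ((hitdiff N z hz).div_const _).differentiableWithinAt
  have hloc : TendstoLocallyUniformlyOn F f atTop (Metric.ball (0 : ℂ) r) :=
    (huf.mono Metric.ball_subset_closedBall).tendstoLocallyUniformlyOn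
  have hfd : DifferentiableOn ℂ f (Metric.ball (0 : ℂ) r) :=
    hloc.differentiableOn (Eventually.of_forall hFdiff) Metric.isOpen_ball
  have hmem : Metric.ball (0 : ℂ) r ∈ nhds (0 : ℂ) :=
    Metric.isOpen_ball.mem_nhds (Metric.mem_ball_self hr0)
  have hF0 : ∀ N : ℕ, F N 0 = 0 := by
    intro N; rw [hFdef]; simp [hfix N]
  have hFderiv : ∀ N : ℕ, deriv (F N) 0 = 1 := by
    intro N
    have hDN : HasDerivAt (u^[N]) (l ^ N) 0 := by
      induction N with
      | zero => simpa using hasDerivAt_id (0 : ℂ)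
      | succ N ih =>
        rw [Function.iterate_succ']
        have hu' : HasDerivAt u l (u^[N] 0) := by
          rw [hfix N, hldef]; exact hud.hasDerivAt
        simpa [pow_succ, mul_comm] using hu'.comp 0 ih
    have hDF : HasDerivAt (F N) (l ^ N / l ^ N) 0 := by
      rw [hFdef]; exact hDN.div_const _
    rw [hDF.deriv]
    field_simp
  have hFshift : ∀ N : ℕ, ∀ z : ℂ, ‖z‖ ≤ r → F N (u z) = l * F (N + 1) z := by
    intro N z _
    rw [hFdef]
    simp only [← Function.iterate_succ_apply]
    rw [pow_succ]
    field_simp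
  refine ⟨f, hfd.analyticAt hmem, ?_, ?_, ?_⟩
  · -- f 0 = 0
    have h0 : (0 : ℂ) ∈ Metric.closedBall (0 : ℂ) r := by simpa using hr0.le
    have t1 := htend 0 h0
    have t2 : Tendsto (fun N => F N 0) atTop (nhds (0 : ℂ)) := by
      have heq : (fun N => F N 0) = fun _ => (0 : ℂ) := by
        funext N; exact hF0 N
      rw [heq]; exact tendsto_const_nhds
    exact tendsto_nhds_unique t1 t2
  · -- deriv f 0 = 1
    have hder := hloc.deriv (Eventually.of_forall hFdiff) Metric.isOpen_ball
    have h0 : (0 : ℂ) ∈ Metric.ball (0 : ℂ) r := Metric.mem_ball_self hr0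
    have t1 : Tendsto (fun N => deriv (F N) 0) atTop (nhds (deriv f 0)) :=
      hder.tendsto_at h0
    have heq : (fun N => deriv (F N) 0) = fun _ => (1 : ℂ) := by
      funext N; exact hFderiv N
    rw [heq] at t1
    exact tendsto_nhds_unique t1 tendsto_const_nhds
  · -- functional equation
    filter_upwards [hmem] with z hz
    rw [Metric.mem_ball, dist_zero_right] at hz
    have hz' : u z ∈ Metric.closedBall (0 : ℂ) r := by
      rw [Metric.mem_closedBall, dist_zero_right]
      have := hmap z hz.le
      nlinarith [norm_nonneg z]
    have t1 : Tendsto (fun N => F N (u z)) atTop (nhds (f (u z))) := htend _ hz'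
    have t3 : Tendsto (fun N => l * F (N + 1) z) atTop (nhds (l * f z)) := by
      have hz'' : z ∈ Metric.closedBall (0 : ℂ) r := by
        rw [Metric.mem_closedBall, dist_zero_right]; exact hz.le
      exact ((htend z hz'').comp (tendsto_add_atTop_nat 1)).const_mul l
    have t1' : Tendsto (fun N => l * F (N + 1) z) atTop (nhds (f (u z))) :=
      t1.congr fun N => hFshift N z hz.le
    exact tendsto_nhds_unique t1' t3
end

section
/- Let u : ℂ → ℂ be analytic at 0 with u(0) = 0 and multiplier λ = u'(0) satisfying |λ| > 1. Then there exists a function f : ℂ → ℂ analytic at 0 with f(0) = 0 and f'(0) = 1 such that f(u(z)) = λ · f(z) for all z in some neighborhood of 0; i.e., the local conjugacy problem is solvable whenever |λ| ≠ 1 with |λ| > 1. -/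
open Filter

open Metric Topology Function

set_option maxHeartbeats 1000000 in
lemma koenigs_attract (v : ℂ → ℂ) (hv : AnalyticAt ℂ v 0) (hv0 : v 0 = 0)
    (hm1 : ‖deriv v 0‖ < 1) (hm0 : deriv v 0 ≠ 0) :
    ∃ f : ℂ → ℂ, AnalyticAt ℂ f 0 ∧ f 0 = 0 ∧ deriv f 0 = 1 ∧
      ∀ᶠ z in 𝓝 (0:ℂ), f (v z) = deriv v 0 * f z := by
  set μ := deriv v 0 with hμ
  set m := ‖μ‖ with hm
  have hm_pos : 0 < m := norm_pos_iff.mpr hm0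
  -- choose c with m < c, c < 1, c ^ 2 < m
  obtain ⟨c, hmc, hc1, hc2m⟩ : ∃ c : ℝ, m < c ∧ c < 1 ∧ c ^ 2 < m := by
    have hsm : m < Real.sqrt m := (Real.lt_sqrt hm_pos.le).mpr (by nlinarith)
    have hsm1 : Real.sqrt m < 1 := by
      rw [show (1:ℝ) = Real.sqrt 1 by simp]
      exact Real.sqrt_lt_sqrt hm_pos.le hm1
    refine ⟨(m + Real.sqrt m) / 2, by linarith, by linarith, ?_⟩
    nlinarith [Real.sq_sqrt hm_pos.le, Real.sqrt_nonneg m]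
  have hc_pos : 0 < c := lt_trans hm_pos hmc
  -- quadratic bound near 0
  obtain ⟨p, hp⟩ := id hv
  have hO : (fun y : ℂ => v y - μ * y) =O[𝓝 0] fun y => ‖y‖ ^ 2 := by
    have h2 := hp.isBigO_sub_partialSum_pow 2
    simp only [zero_add] at h2
    have hc0 : p.coeff 0 = 0 := by
      have := hp.coeff_zero (fun _ => 1)
      rw [hv0] at this
      exact this
    have hc1' : p.coeff 1 = μ := by rw [hμ, hp.deriv]; rfl
    have hps : ∀ y : ℂ, p.partialSum 2 y = μ * y := by
      intro y
      simp [FormalMultilinearSeries.partialSum, Finset.sum_range_succ, hc0, hc1',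
        smul_eq_mul, mul_comm]
    refine h2.congr' ?_ EventuallyEq.rfl
    filter_upwards with y using by rw [hps]
  rw [Asymptotics.isBigO_iff] at hO
  obtain ⟨C, hC⟩ := hO
  set C' := max C 1 with hC'
  have hC'_pos : (0:ℝ) < C' := lt_of_lt_of_le one_pos (le_max_right _ _)
  have hC2 : ∀ᶠ y in 𝓝 (0:ℂ), ‖v y - μ * y‖ ≤ C' * ‖y‖ ^ 2 := by
    filter_upwards [hC] with y hy
    calc ‖v y - μ * y‖ ≤ C * ‖(‖y‖ ^ 2)‖ := hy
    _ ≤ C' * ‖y‖ ^ 2 := by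
        rw [Real.norm_of_nonneg (by positivity)]
        exact mul_le_mul_of_nonneg_right (le_max_left _ _) (by positivity)
  have han : ∀ᶠ y in 𝓝 (0:ℂ), AnalyticAt ℂ v y := hv.eventually_analyticAt
  obtain ⟨ε, hε_pos, hε⟩ := Metric.eventually_nhds_iff.mp (hC2.and han)
  -- choose the radius
  set r := min (ε / 2) ((c - m) / C') with hr
  have hr_pos : 0 < r := lt_min (by linarith) (div_pos (by linarith) hC'_pos)
  have hrε : r < ε := lt_of_le_of_lt (min_le_left _ _) (by linarith)
  have hrC : C' * r ≤ c - m := by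
    have h1 : r ≤ (c - m) / C' := min_le_right _ _
    calc C' * r ≤ C' * ((c - m) / C') := by nlinarith
    _ = c - m := by field_simp
  set s := Metric.closedBall (0:ℂ) r with hs
  have hsmem : ∀ z ∈ s, ‖z‖ ≤ r := fun z hz => mem_closedBall_zero_iff.mp hz
  have hball : ∀ z ∈ s, ‖v z - μ * z‖ ≤ C' * ‖z‖ ^ 2 ∧ AnalyticAt ℂ v z := by
    intro z hz
    refine hε ?_
    rw [dist_zero_right]
    exact lt_of_le_of_lt (hsmem z hz) hrε
  -- the contraction bound
  have hcontr : ∀ z ∈ s, ‖v z‖ ≤ c * ‖z‖ := by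
    intro z hz
    have h1 := (hball z hz).1
    have h2 : ‖z‖ ≤ r := hsmem z hz
    have h3 : ‖z‖ ^ 2 ≤ r * ‖z‖ := by nlinarith [norm_nonneg z]
    have h4 : C' * ‖z‖ ^ 2 ≤ (C' * r) * ‖z‖ := by nlinarith [hC'_pos.le]
    have h5 : (C' * r) * ‖z‖ ≤ (c - m) * ‖z‖ :=
      mul_le_mul_of_nonneg_right hrC (norm_nonneg z)
    calc ‖v z‖ = ‖μ * z + (v z - μ * z)‖ := by ring_nf
    _ ≤ ‖μ * z‖ + ‖v z - μ * z‖ := norm_add_le _ _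
    _ ≤ m * ‖z‖ + C' * ‖z‖ ^ 2 := by rw [norm_mul]; gcongr
    _ ≤ m * ‖z‖ + (c - m) * ‖z‖ := by linarith
    _ = c * ‖z‖ := by ring
  have hmaps : Set.MapsTo v s s := by
    intro z hz
    rw [hs, mem_closedBall_zero_iff]
    calc ‖v z‖ ≤ c * ‖z‖ := hcontr z hz
    _ ≤ 1 * r := by nlinarith [norm_nonneg z, hsmem z hz, hc_pos.le, hc1.le]
    _ = r := one_mul r
  have hiter : ∀ n, ∀ z ∈ s, ‖v^[n] z‖ ≤ c ^ n * ‖z‖ := by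
    intro n
    induction n with
    | zero => intro z hz; simp
    | succ n ih =>
      intro z hz
      have hcn : c ^ n ≤ 1 := pow_le_one₀ hc_pos.le hc1.le
      have hmem : v^[n] z ∈ s := by
        rw [hs, mem_closedBall_zero_iff]
        calc ‖v^[n] z‖ ≤ c ^ n * ‖z‖ := ih z hz
        _ ≤ 1 * r := by nlinarith [norm_nonneg z, hsmem z hz, pow_nonneg hc_pos.le n]
        _ = r := one_mul r
      rw [Function.iterate_succ_apply']
      calc ‖v (v^[n] z)‖ ≤ c * ‖v^[n] z‖ := hcontr _ hmem
      _ ≤ c * (c ^ n * ‖z‖) := by nlinarith [ih z hz]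
      _ = c ^ (n + 1) * ‖z‖ := by ring
  have hmem_iter : ∀ n, ∀ z ∈ s, v^[n] z ∈ s := by
    intro n z hz
    have hcn : c ^ n ≤ 1 := pow_le_one₀ hc_pos.le hc1.le
    rw [hs, mem_closedBall_zero_iff]
    calc ‖v^[n] z‖ ≤ c ^ n * ‖z‖ := hiter n z hz
    _ ≤ 1 * r := by nlinarith [norm_nonneg z, hsmem z hz, pow_nonneg hc_pos.le n]
    _ = r := one_mul r
  -- the approximating sequence
  set fn : ℕ → ℂ → ℂ := fun n z => (μ⁻¹) ^ n * v^[n] z with hfn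
  set g : ℕ → ℂ → ℂ := fun k z => (μ⁻¹) ^ (k + 1) * (v^[k + 1] z - μ * v^[k] z) with hg
  have hg_eq : ∀ k z, fn (k + 1) z - fn k z = g k z := by
    intro k z
    simp only [hfn, hg]
    have h : (μ⁻¹) ^ k = (μ⁻¹) ^ (k + 1) * μ := by
      field_simp
      rw [pow_succ, mul_comm μ, mul_assoc, one_div, inv_mul_cancel₀ hm0, mul_one]
    rw [h]; ring
  set q := c ^ 2 / m with hq
  have hq_pos : 0 ≤ q := by positivity
  have hq1 : q < 1 := (div_lt_one hm_pos).mpr hc2m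
  set M := C' * r ^ 2 / m with hM
  have hg_bound : ∀ k, ∀ z ∈ s, ‖g k z‖ ≤ M * q ^ k := by
    intro k z hz
    have hmem := hmem_iter k z hz
    have h1 := (hball _ hmem).1
    have h2 : ‖v^[k] z‖ ≤ c ^ k * ‖z‖ := hiter k z hz
    have h3 : ‖v^[k] z‖ ≤ c ^ k * r := le_trans h2
      (mul_le_mul_of_nonneg_left (hsmem z hz) (pow_nonneg hc_pos.le k))
    have hnorm : ‖v^[k + 1] z - μ * v^[k] z‖ ≤ C' * (c ^ k * r) ^ 2 := by
      rw [Function.iterate_succ_apply']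
      calc ‖v (v^[k] z) - μ * v^[k] z‖ ≤ C' * ‖v^[k] z‖ ^ 2 := h1
      _ ≤ C' * (c ^ k * r) ^ 2 := by
          have h4 : ‖v^[k] z‖ ^ 2 ≤ (c ^ k * r) ^ 2 := by
            have := norm_nonneg (v^[k] z)
            nlinarith
          exact mul_le_mul_of_nonneg_left h4 hC'_pos.le
    calc ‖g k z‖ = (m⁻¹) ^ (k + 1) * ‖v^[k + 1] z - μ * v^[k] z‖ := by
          rw [hg]
          simp only [norm_mul, norm_pow, norm_inv]
          rfl
    _ ≤ (m⁻¹) ^ (k + 1) * (C' * (c ^ k * r) ^ 2) := by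
        have hpos : (0:ℝ) ≤ (m⁻¹) ^ (k + 1) := by positivity
        exact mul_le_mul_of_nonneg_left hnorm hpos
    _ = M * q ^ k := by
        rw [hM, hq, div_pow, mul_pow, ← pow_mul]
        have hmne : m ≠ 0 := hm_pos.ne'
        field_simp
        rw [← pow_mul', one_div,
          show m * m⁻¹ ^ (k + 1) * c ^ (k * 2) * m ^ k = (m * m⁻¹) ^ (k + 1) * c ^ (k * 2) by ring,
          mul_inv_cancel₀ hmne, one_pow, one_mul]
  have hsummable : Summable (fun k => M * q ^ k) :=
    (summable_geometric_of_lt_one hq_pos hq1).mul_left M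
  have hTU0 : TendstoUniformlyOn (fun N z => ∑ k ∈ Finset.range N, g k z)
      (fun z => ∑' k, g k z) atTop s :=
    tendstoUniformlyOn_tsum_nat hsummable hg_bound
  set f : ℂ → ℂ := fun z => z + ∑' k, g k z with hf
  have hfn_eq : ∀ N z, fn N z = z + ∑ k ∈ Finset.range N, g k z := by
    intro N z
    have h := Finset.sum_range_sub (fun k => fn k z) N
    have h2 : ∑ k ∈ Finset.range N, (fn (k+1) z - fn k z) = ∑ k ∈ Finset.range N, g k z :=
      Finset.sum_congr rfl fun k _ => hg_eq k z
    have h0 : fn 0 z = z := by simp [hfn]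
    rw [h2] at h
    rw [h, h0]; ring
  have hTU : TendstoUniformlyOn fn f atTop s := by
    have hid : TendstoUniformlyOn (fun (_ : ℕ) (z : ℂ) => z) (fun z => z) atTop s := by
      rw [tendstoUniformlyOn_iff]
      intro δ hδ
      filter_upwards with n z _ using by simpa using hδ
    have hadd := hid.add hTU0
    refine hadd.congr ?_
    filter_upwards with N z _ using (hfn_eq N z).symm
  have hTLU : TendstoLocallyUniformlyOn fn f atTop (Metric.ball (0:ℂ) r) :=
    (hTU.tendstoLocallyUniformlyOn).mono Metric.ball_subset_closedBall
  -- differentiability of the iterates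
  have hvdiff : DifferentiableOn ℂ v s := fun z hz =>
    ((hball z hz).2).differentiableAt.differentiableWithinAt
  have hiterdiff : ∀ n, DifferentiableOn ℂ (v^[n]) s := by
    intro n
    induction n with
    | zero => simpa using differentiableOn_id
    | succ n ih =>
      have h : v^[n+1] = v ∘ v^[n] := Function.iterate_succ' v n
      rw [h]
      exact hvdiff.comp ih (fun z hz => hmem_iter n z hz)
  have hfndiff : ∀ n, DifferentiableOn ℂ (fn n) (Metric.ball (0:ℂ) r) := by
    intro n
    exact (((hiterdiff n).mono Metric.ball_subset_closedBall).const_mul _)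
  have hfdiff : DifferentiableOn ℂ f (Metric.ball (0:ℂ) r) :=
    hTLU.differentiableOn (Eventually.of_forall hfndiff) Metric.isOpen_ball
  have hzero_mem : (0:ℂ) ∈ Metric.ball (0:ℂ) r := Metric.mem_ball_self hr_pos
  refine ⟨f, ?_, ?_, ?_, ?_⟩
  · exact hfdiff.analyticAt (Metric.isOpen_ball.mem_nhds hzero_mem)
  · have hgz : ∀ k, g k 0 = 0 := by
      intro k
      have h1 : v^[k+1] (0:ℂ) = 0 := Function.iterate_fixed hv0 (k+1)
      have h2 : v^[k] (0:ℂ) = 0 := Function.iterate_fixed hv0 k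
      show (μ⁻¹) ^ (k + 1) * (v^[k + 1] (0:ℂ) - μ * v^[k] (0:ℂ)) = 0
      rw [h1, h2]
      ring
    simp [hf, hgz]
  · -- derivative at 0 is 1
    have hiterd : ∀ n, HasDerivAt (v^[n]) (μ ^ n) 0 := by
      intro n
      induction n with
      | zero => simpa using hasDerivAt_id (0:ℂ)
      | succ n ih =>
        have hfix : v^[n] 0 = 0 := Function.iterate_fixed hv0 n
        have hvd : HasDerivAt v μ (v^[n] 0) := by
          rw [hfix]
          exact hv.differentiableAt.hasDerivAt
        have hcomp := HasDerivAt.comp 0 hvd ih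
        rw [← Function.iterate_succ' v n] at hcomp
        convert hcomp using 1
        rfl
        rfl
        exact pow_succ' μ n
    have hfn_d : ∀ n, deriv (fn n) 0 = 1 := by
      intro n
      have h : HasDerivAt (fn n) ((μ⁻¹) ^ n * μ ^ n) 0 := (hiterd n).const_mul _
      rw [h.deriv]
      rw [← mul_pow, inv_mul_cancel₀ hm0, one_pow]
    have hd : TendstoLocallyUniformlyOn (deriv ∘ fn) (deriv f) atTop (Metric.ball (0:ℂ) r) :=
      hTLU.deriv (Eventually.of_forall hfndiff) Metric.isOpen_ball
    have htend : Tendsto (fun n => deriv (fn n) 0) atTop (𝓝 (deriv f 0)) :=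
      hd.tendsto_at hzero_mem
    have hconst : Tendsto (fun _ : ℕ => (1:ℂ)) atTop (𝓝 (deriv f 0)) :=
      htend.congr fun n => hfn_d n
    exact tendsto_nhds_unique hconst tendsto_const_nhds
  · have hsnhds : s ∈ 𝓝 (0:ℂ) := Metric.closedBall_mem_nhds 0 hr_pos
    filter_upwards [hsnhds] with z hz
    have hvz : v z ∈ s := hmaps hz
    have hA : Tendsto (fun n => fn n (v z)) atTop (𝓝 (f (v z))) := hTU.tendsto_at hvz
    have hB : Tendsto (fun n => fn (n + 1) z) atTop (𝓝 (f z)) :=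
      (hTU.tendsto_at hz).comp (tendsto_add_atTop_nat 1)
    have hkey : ∀ n, fn n (v z) = μ * fn (n + 1) z := by
      intro n
      simp only [hfn]
      rw [Function.iterate_succ_apply]
      have h : μ * (μ⁻¹) ^ (n + 1) = (μ⁻¹) ^ n := by
        field_simp
        rw [pow_succ', ← mul_assoc, one_div, mul_inv_cancel₀ hm0, one_mul]
      rw [← h]; ring
    have hB' : Tendsto (fun n => μ * fn (n + 1) z) atTop (𝓝 (μ * f z)) := hB.const_mul μ
    have hA' : Tendsto (fun n => fn n (v z)) atTop (𝓝 (μ * f z)) :=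
      hB'.congr fun n => (hkey n).symm
    exact tendsto_nhds_unique hA hA'


lemma aux_inverse (u : ℂ → ℂ) (hu : AnalyticAt ℂ u 0) (hu0 : u 0 = 0)
    (hne : deriv u 0 ≠ 0) :
    ∃ v : ℂ → ℂ, AnalyticAt ℂ v 0 ∧ v 0 = 0 ∧ deriv v 0 = (deriv u 0)⁻¹ ∧
      (∀ᶠ z in 𝓝 (0:ℂ), v (u z) = z) ∧ (∀ᶠ w in 𝓝 (0:ℂ), u (v w) = w) := by
  have hd : HasStrictDerivAt u (deriv u 0) 0 := by
    obtain ⟨p, hp⟩ := hu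
    have := hp.hasStrictDerivAt
    rwa [← hp.deriv] at this
  have hF : HasStrictFDerivAt u
      (ContinuousLinearEquiv.unitsEquivAut ℂ (Units.mk0 _ hne) : ℂ →L[ℂ] ℂ) 0 :=
    hd.hasStrictFDerivAt_equiv hne
  set F := hF.toOpenPartialHomeomorph u with hFdef
  have hcoe : (F : ℂ → ℂ) = u := hF.toOpenPartialHomeomorph_coe
  have hmem : (0:ℂ) ∈ F.source := hF.mem_toOpenPartialHomeomorph_source
  have hF0 : F 0 = 0 := by rw [hcoe, hu0]
  refine ⟨F.symm, ?_, ?_, ?_, ?_, ?_⟩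
  · have h' : fderiv ℂ (⇑F) 0 = (ContinuousLinearEquiv.unitsEquivAut ℂ (Units.mk0 _ hne)
        : ℂ →L[ℂ] ℂ) := by
      rw [hcoe]; exact hF.hasFDerivAt.fderiv
    have := F.analyticAt_symm' hmem (by rw [hcoe]; exact hu) h'
    rwa [hF0] at this
  · have := F.left_inv hmem
    rwa [hF0] at this
  · have h2 : HasStrictDerivAt (hd.localInverse u _ 0 hne) (deriv u 0)⁻¹ (u 0) :=
      hd.to_localInverse hne
    have h3 : hd.localInverse u _ 0 hne = F.symm := rfl
    rw [h3, hu0] at h2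
    exact h2.hasDerivAt.deriv
  · have := hF.eventually_left_inverse
    have h3 : hF.localInverse u _ 0 = F.symm := rfl
    simpa [h3] using this
  · have := hF.eventually_right_inverse
    have h3 : hF.localInverse u _ 0 = F.symm := rfl
    rw [h3, hu0] at this
    exact this

/-- If `u` is analytic at `0`, `u 0 = 0`, and its multiplier `λ = u'(0)` satisfies `|λ| > 1`,
then there is `f` analytic at `0` with `f 0 = 0`, `f'(0) = 1`, and `f(u(z)) = λ f(z)`
near `0`. -/
theorem stmt9 (u : ℂ → ℂ) (hu : AnalyticAt ℂ u 0) (hu0 : u 0 = 0)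
    (h1 : 1 < ‖deriv u 0‖) :
    ∃ f : ℂ → ℂ, AnalyticAt ℂ f 0 ∧ f 0 = 0 ∧ deriv f 0 = 1 ∧
      ∀ᶠ z in nhds (0 : ℂ), f (u z) = deriv u 0 * f z := by
  set lam := deriv u 0 with hlam
  have hlam0 : lam ≠ 0 := by
    intro h
    rw [h] at h1
    simp at h1
    linarith
  obtain ⟨v, hv_an, hv0, hv_d, hvu, huv⟩ := aux_inverse u hu hu0 hlam0
  have hvd0 : deriv v 0 ≠ 0 := by
    rw [hv_d]
    exact inv_ne_zero hlam0
  have hnorm : ‖deriv v 0‖ < 1 := by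
    rw [hv_d, norm_inv]
    rw [inv_lt_one_iff₀]
    right
    exact h1
  obtain ⟨f, hf_an, hf0, hf_d, hfe⟩ := koenigs_attract v hv_an hv0 hnorm hvd0
  refine ⟨f, hf_an, hf0, hf_d, ?_⟩
  have hcont : Filter.Tendsto u (𝓝 0) (𝓝 0) := by
    have := hu.continuousAt.tendsto
    rwa [hu0] at this
  have h2 : ∀ᶠ z in 𝓝 (0:ℂ), f (v (u z)) = deriv v 0 * f (u z) := hcont.eventually hfe
  filter_upwards [hvu, h2] with z hz1 hz2
  rw [hz1] at hz2
  -- hz2 : f z = deriv v 0 * f (u z)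
  rw [hv_d] at hz2
  have : lam * f z = lam * (lam⁻¹ * f (u z)) := by rw [← hz2]
  rw [← mul_assoc, mul_inv_cancel₀ hlam0, one_mul] at this
  rw [this]
end

section
/- Let u : ℝ → ℝ be real-analytic at 0 with u(0) = 0 and multiplier λ = u'(0) satisfying 0 < λ < 1. Then the analytic iteration problem for u is solvable: there exists a family φ : ℝ → (ℝ → ℝ) such that for every t ∈ ℝ the map φᵗ is real-analytic at 0 with φᵗ(0) = 0, φ⁰(x) = x for all x in a neighborhood of 0, φ¹(x) = u(x) for all x in a neighborhood of 0, and for all s, t ∈ ℝ one has φ^{t+s}(x) = φᵗ(φˢ(x)) for all x in a neighborhood of 0. -/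
open Filter Metric Complex
open scoped Topology ComplexConjugate

set_option maxHeartbeats 1000000



lemma stmt10_pullback {α : Type*} [TopologicalSpace α] {g : α → ℂ} {x : α}
    (hg : ContinuousAt g x) (hg0 : g x = 0) {P : ℂ → Prop}
    (hP : ∀ᶠ w in 𝓝 (0:ℂ), P w) : ∀ᶠ y in 𝓝 x, P (g y) := by
  have h := hg.tendsto
  rw [hg0] at h
  exact h.eventually hP

lemma stmt10_complexify (u : ℝ → ℝ) (hu : AnalyticAt ℝ u 0) (hu0 : u 0 = 0) :
    ∃ U : ℂ → ℂ, AnalyticAt ℂ U 0 ∧ U 0 = 0 ∧ deriv U 0 = ((deriv u 0 : ℝ) : ℂ) ∧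
      (∀ z, U (conj z) = conj (U z)) ∧ (∀ᶠ x : ℝ in 𝓝 0, U x = ((u x : ℝ) : ℂ)) := by
  obtain ⟨p, hp⟩ := hu
  set a : ℕ → ℝ := fun n => p.coeff n with ha
  have hev : ∀ᶠ x : ℝ in 𝓝 0, HasSum (fun n => x ^ n • a n) (u (0 + x)) :=
    hasFPowerSeriesAt_iff.1 hp
  rw [Metric.eventually_nhds_iff] at hev
  obtain ⟨δ, hδ, hδs⟩ := hev
  set x₀ : ℝ := δ / 2 with hx₀
  have hx₀pos : 0 < x₀ := by positivity
  have hx₀lt : dist x₀ (0:ℝ) < δ := by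
    rw [Real.dist_eq, sub_zero, abs_of_pos hx₀pos]; rw [hx₀]; linarith
  have hS0 : Summable (fun n => x₀ ^ n • a n) := (hδs hx₀lt).summable
  have hbdd : ∃ C : ℝ, ∀ n, |a n| * x₀ ^ n ≤ C := by
    have h0 : Filter.Tendsto (fun n => ‖x₀ ^ n • a n‖) atTop (𝓝 0) := by
      simpa using hS0.tendsto_atTop_zero.norm
    obtain ⟨C, hC⟩ := h0.bddAbove_range
    refine ⟨C, fun n => ?_⟩
    have := hC (Set.mem_range_self n)
    rw [norm_smul] at this
    calc |a n| * x₀ ^ n = ‖x₀ ^ n‖ * ‖a n‖ := by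
          rw [Real.norm_eq_abs, Real.norm_eq_abs, abs_of_pos (by positivity : (0:ℝ) < x₀ ^ n)]
          ring
      _ ≤ C := this
  have key : ∀ z : ℂ, ‖z‖ < x₀ → Summable (fun n => z ^ n * (a n : ℂ)) := by
    intro z hz
    obtain ⟨C, hC⟩ := hbdd
    apply Summable.of_norm
    have hb : ∀ n, ‖z ^ n * (a n : ℂ)‖ ≤ C * (‖z‖ / x₀) ^ n := by
      intro n
      have h1 : ‖z ^ n * (a n : ℂ)‖ = ‖z‖ ^ n * |a n| := by
        rw [norm_mul, norm_pow, Complex.norm_real, Real.norm_eq_abs]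
      have h2 : ‖z‖ ^ n = (‖z‖ / x₀) ^ n * x₀ ^ n := by
        rw [div_pow, div_mul_cancel₀]
        positivity
      rw [h1, h2]
      calc (‖z‖ / x₀) ^ n * x₀ ^ n * |a n| = (‖z‖ / x₀) ^ n * (|a n| * x₀ ^ n) := by ring
        _ ≤ (‖z‖ / x₀) ^ n * C := mul_le_mul_of_nonneg_left (hC n) (by positivity)
        _ = C * (‖z‖ / x₀) ^ n := by ring
    exact Summable.of_nonneg_of_le (fun n => norm_nonneg _) hb
      ((summable_geometric_of_lt_one (by positivity) (by rwa [div_lt_one hx₀pos])).mul_left C)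
  set U : ℂ → ℂ := fun z => ∑' n, z ^ n * (a n : ℂ) with hUdef
  set q : FormalMultilinearSeries ℂ ℂ ℂ :=
    FormalMultilinearSeries.ofScalars ℂ (fun n => (a n : ℂ)) with hqdef
  have hqc : ∀ n, q.coeff n = (a n : ℂ) := by
    intro n
    show q n (fun _ => 1) = _
    rw [hqdef]
    rw [FormalMultilinearSeries.ofScalars_apply_eq]
    simp
  have hU : HasFPowerSeriesAt U q 0 := by
    rw [hasFPowerSeriesAt_iff]
    rw [Metric.eventually_nhds_iff]
    refine ⟨x₀, hx₀pos, fun {z} hz => ?_⟩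
    rw [dist_zero_right] at hz
    have hfun : (fun n => z ^ n • q.coeff n) = fun n => z ^ n * (a n : ℂ) := by
      funext n; rw [hqc n, smul_eq_mul]
    rw [zero_add, hfun]
    exact (key z hz).hasSum
  have hpc0 : p.coeff 0 = u 0 := hp.coeff_zero (fun _ => 1)
  have hqc0 : q.coeff 0 = U 0 := hU.coeff_zero (fun _ => 1)
  have hU0 : U 0 = 0 := by
    rw [← hqc0, hqc 0, ha]
    simp [hpc0, hu0]
  have hUd : deriv U 0 = ((deriv u 0 : ℝ) : ℂ) := by
    have e1 : deriv U 0 = q.coeff 1 := hU.deriv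
    have e2 : deriv u 0 = p.coeff 1 := hp.deriv
    rw [e1, hqc 1, ha, e2]
  have hUc : ∀ z, U (conj z) = conj (U z) := by
    intro z
    rw [hUdef]
    simp only
    rw [Complex.conj_tsum]
    apply tsum_congr
    intro n
    rw [map_mul, map_pow, Complex.conj_ofReal]
  have hUreal : ∀ᶠ x : ℝ in 𝓝 0, U x = ((u x : ℝ) : ℂ) := by
    rw [Metric.eventually_nhds_iff]
    refine ⟨min δ x₀, lt_min hδ hx₀pos, fun {x} hx => ?_⟩
    have hx1 : dist x (0:ℝ) < δ := lt_of_lt_of_le hx (min_le_left _ _)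
    have hs := hδs hx1
    rw [zero_add] at hs
    have hs2 : HasSum (fun n => ((x:ℂ)) ^ n * (a n : ℂ)) ((u x : ℂ)) := by
      have := Complex.hasSum_ofReal.2 hs
      convert this using 2 with n
      rw [smul_eq_mul]
      push_cast
      ring
    exact hs2.tsum_eq
  exact ⟨U, ⟨q, hU⟩, hU0, hUd, hUc, hUreal⟩




lemma stmt10_koenigs (U : ℂ → ℂ) (l : ℝ) (hl0 : 0 < l) (hl1 : l < 1)
    (hA : AnalyticAt ℂ U 0) (hU0 : U 0 = 0) (hUd : deriv U 0 = ((l : ℝ) : ℂ))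
    (hUc : ∀ z, U (conj z) = conj (U z)) :
    ∃ h : ℂ → ℂ, AnalyticAt ℂ h 0 ∧ h 0 = 0 ∧ deriv h 0 = 1 ∧
      (∀ z, h (conj z) = conj (h z)) ∧ (∀ᶠ z in 𝓝 (0:ℂ), h (U z) = ((l:ℝ):ℂ) * h z) := by
  have hlC : ((l:ℝ):ℂ) ≠ 0 := by
    exact_mod_cast Complex.ofReal_ne_zero.2 hl0.ne'
  obtain ⟨q, hq⟩ := hA
  -- partial sum of degree 2
  have hps : ∀ y : ℂ, q.partialSum 2 y = ((l:ℝ):ℂ) * y := by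
    intro y
    have c0 : q.coeff 0 = 0 := by
      have := hq.coeff_zero (fun _ => 1)
      rw [hU0] at this
      exact this
    have c1 : q.coeff 1 = ((l:ℝ):ℂ) := by
      have := hq.deriv
      rw [hUd] at this
      exact this.symm
    have e0 : q 0 (fun _ => y) = q.coeff 0 := by
      rw [FormalMultilinearSeries.apply_eq_pow_smul_coeff]; simp
    have e1 : q 1 (fun _ => y) = y • q.coeff 1 := by
      rw [FormalMultilinearSeries.apply_eq_pow_smul_coeff]; simp
    simp [FormalMultilinearSeries.partialSum, Finset.sum_range_succ, e0, e1, c0, c1]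
    ring
  -- quadratic bound
  have big := hq.isBigO_sub_partialSum_pow 2
  rw [Asymptotics.isBigO_iff] at big
  obtain ⟨C, hC⟩ := big
  simp only [zero_add, hps] at hC
  rw [Metric.eventually_nhds_iff] at hC
  obtain ⟨r₁, hr₁, hquad'⟩ := hC
  set M := max C 1 with hMdef
  have hM1 : (1:ℝ) ≤ M := le_max_right _ _
  have hM0 : 0 < M := lt_of_lt_of_le one_pos hM1
  have hquad : ∀ y : ℂ, ‖y‖ < r₁ → ‖U y - ((l:ℝ):ℂ) * y‖ ≤ M * ‖y‖ ^ 2 := by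
    intro y hy
    have h1 := hquad' (by rwa [dist_zero_right])
    calc ‖U y - ((l:ℝ):ℂ) * y‖ ≤ C * ‖‖y‖ ^ 2‖ := h1
      _ ≤ M * ‖y‖ ^ 2 := by
          rw [Real.norm_of_nonneg (by positivity)]
          exact mul_le_mul_of_nonneg_right (le_max_left _ _) (by positivity)
  -- differentiability near 0
  have hever := AnalyticAt.eventually_analyticAt (⟨q, hq⟩ : AnalyticAt ℂ U 0)
  rw [Metric.eventually_nhds_iff] at hever
  obtain ⟨r₂, hr₂, han⟩ := hever
  have hUdiff : ∀ y : ℂ, ‖y‖ < r₂ → DifferentiableAt ℂ U y := fun y hy =>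
    (han (by rwa [dist_zero_right])).differentiableAt
  -- constants
  set s := Real.sqrt l with hsdef
  have hs0 : 0 < s := Real.sqrt_pos.2 hl0
  have hss : s * s = l := Real.mul_self_sqrt hl0.le
  have hs1 : s < 1 := by nlinarith
  have hsl : l < s := by nlinarith
  set c := (l + s)/2 with hcdef
  have hc0 : 0 < c := by positivity
  have hlc : l < c := by rw [hcdef]; linarith
  have hc1 : c < 1 := by rw [hcdef]; linarith
  have hcs : c < s := by rw [hcdef]; linarith
  have hkey : c ^ 2 < l := by nlinarith
  set r := min (r₁/2) (min (r₂/2) ((c - l)/M)) with hrdef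
  have hr : 0 < r := by
    have h3 : 0 < (c - l)/M := by
      apply div_pos (by linarith) hM0
    have := lt_min (by linarith : (0:ℝ) < r₁/2) (lt_min (by linarith : (0:ℝ) < r₂/2) h3)
    exact this
  have hrr₁ : r < r₁ := lt_of_le_of_lt (min_le_left _ _) (by linarith)
  have hrr₂ : r < r₂ := lt_of_le_of_lt (le_trans (min_le_right _ _) (min_le_left _ _)) (by linarith)
  have hrM : M * r ≤ c - l := by
    have h4 : r ≤ (c - l)/M := le_trans (min_le_right _ _) (min_le_right _ _)
    calc M * r ≤ M * ((c - l)/M) := mul_le_mul_of_nonneg_left h4 hM0.le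
      _ = c - l := by field_simp
  clear_value M s c r
  have hquad2 : ∀ y : ℂ, ‖y‖ ≤ r → ‖U y - ((l:ℝ):ℂ) * y‖ ≤ M * ‖y‖ ^ 2 :=
    fun y hy => hquad y (lt_of_le_of_lt hy hrr₁)
  have hnorml : ‖((l:ℝ):ℂ)‖ = l := by
    rw [Complex.norm_real, Real.norm_of_nonneg hl0.le]
  have hcontr : ∀ y : ℂ, ‖y‖ ≤ r → ‖U y‖ ≤ c * ‖y‖ := by
    intro y hy
    have h1 := hquad2 y hy
    have h2 : ‖U y‖ ≤ ‖((l:ℝ):ℂ) * y‖ + ‖U y - ((l:ℝ):ℂ) * y‖ := by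
      calc ‖U y‖ = ‖((l:ℝ):ℂ) * y + (U y - ((l:ℝ):ℂ) * y)‖ := by ring_nf
        _ ≤ _ := norm_add_le _ _
    rw [norm_mul, hnorml] at h2
    have h3 : M * ‖y‖ ^ 2 ≤ (M * r) * ‖y‖ := by nlinarith [mul_nonneg (mul_nonneg hM0.le (sub_nonneg.2 hy)) (norm_nonneg y)]
    nlinarith [norm_nonneg y]
  have hcpow : ∀ n : ℕ, c ^ n ≤ 1 := fun n => pow_le_one₀ hc0.le hc1.le
  have hiter : ∀ n : ℕ, ∀ y : ℂ, ‖y‖ ≤ r → ‖U^[n] y‖ ≤ c ^ n * ‖y‖ := by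
    intro n
    induction n with
    | zero => intro y hy; simp
    | succ n ih =>
      intro y hy
      rw [Function.iterate_succ_apply']
      have h1 := ih y hy
      have h2 : ‖U^[n] y‖ ≤ r := le_trans h1 (by nlinarith [hcpow n, norm_nonneg y])
      calc ‖U (U^[n] y)‖ ≤ c * ‖U^[n] y‖ := hcontr _ h2
        _ ≤ c * (c ^ n * ‖y‖) := by nlinarith
        _ = c ^ (n+1) * ‖y‖ := by ring
  have hiter_mem : ∀ n : ℕ, ∀ y : ℂ, ‖y‖ ≤ r → ‖U^[n] y‖ ≤ r := fun n y hy =>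
    le_trans (hiter n y hy) (by nlinarith [hcpow n, norm_nonneg y])
  set d : ℕ → ℂ → ℂ :=
    fun n z => (U (U^[n] z) - ((l:ℝ):ℂ) * (U^[n] z)) / ((l:ℝ):ℂ) ^ (n+1) with hd
  set h : ℂ → ℂ := fun z => z + ∑' n, d n z with hhdef
  -- pointwise bound with ‖z‖
  have hdb' : ∀ (n : ℕ) (z : ℂ), ‖z‖ ≤ r → ‖d n z‖ ≤ (M * ‖z‖ ^ 2 / l) * (c^2/l) ^ n := by
    intro n z hz
    have h1 : ‖U^[n] z‖ ≤ c ^ n * ‖z‖ := hiter n z hz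
    have h2 : ‖U^[n] z‖ ≤ r := hiter_mem n z hz
    have h3 := hquad2 _ h2
    have hl' : ‖((l:ℝ):ℂ) ^ (n+1)‖ = l ^ (n+1) := by rw [norm_pow, hnorml]
    rw [hd]
    simp only
    rw [norm_div, hl', div_le_iff₀ (by positivity)]
    calc ‖U (U^[n] z) - ((l:ℝ):ℂ) * U^[n] z‖ ≤ M * ‖U^[n] z‖ ^ 2 := h3
      _ ≤ M * (c ^ n * ‖z‖) ^ 2 := by
          have h4 : ‖U^[n] z‖ ^ 2 ≤ (c ^ n * ‖z‖) ^ 2 := by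
            rw [pow_two, pow_two]
            exact mul_le_mul h1 h1 (norm_nonneg _) (by positivity)
          exact mul_le_mul_of_nonneg_left h4 hM0.le
      _ = (M * ‖z‖ ^ 2 / l) * (c^2/l) ^ n * l ^ (n+1) := by
          have hcc : (c^2/l) ^ n = (c^n)^2 / l^n := by
            rw [div_pow, ← pow_mul, mul_comm 2 n, pow_mul]
          rw [hcc, pow_succ]
          field_simp
          ring
  have hb : Summable (fun n : ℕ => (M * r ^ 2 / l) * (c^2/l) ^ n) := by
    apply Summable.mul_left
    apply summable_geometric_of_lt_one (by positivity)
    rw [div_lt_one hl0]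
    exact hkey
  have hdb : ∀ (n : ℕ) (z : ℂ), z ∈ closedBall (0:ℂ) r →
      ‖d n z‖ ≤ (M * r ^ 2 / l) * (c^2/l) ^ n := by
    intro n z hz
    rw [mem_closedBall, dist_zero_right] at hz
    refine le_trans (hdb' n z hz) ?_
    have h5 : M * ‖z‖ ^ 2 / l ≤ M * r ^ 2 / l := by
      gcongr
    have h6 : (0:ℝ) ≤ (c^2/l) ^ n := by positivity
    exact mul_le_mul_of_nonneg_right h5 h6
  -- uniform convergence of partial sums
  have tu := tendstoUniformlyOn_tsum_nat hb hdb
  have hFtend : TendstoUniformlyOn (fun N z => z + ∑ n ∈ Finset.range N, d n z) h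
      atTop (closedBall (0:ℂ) r) := by
    rw [Metric.tendstoUniformlyOn_iff] at tu ⊢
    intro ε hε
    filter_upwards [tu ε hε] with N hN z hz
    have h7 := hN z hz
    rw [hhdef]
    simp only
    rw [dist_add_left]
    exact h7
  -- differentiability of the approximants
  have hWdiff : ∀ (n : ℕ) (z : ℂ), ‖z‖ < r → DifferentiableAt ℂ (U^[n]) z := by
    intro n
    induction n with
    | zero => intro z hz; simpa using differentiableAt_id'
    | succ n ih =>
      intro z hz
      rw [Function.iterate_succ']
      exact DifferentiableAt.comp z
        (hUdiff _ (lt_of_le_of_lt (hiter_mem n z hz.le) hrr₂)) (ih z hz)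
  have hddiff : ∀ (n : ℕ) (z : ℂ), ‖z‖ < r → DifferentiableAt ℂ (d n) z := by
    intro n z hz
    have hWz := hWdiff n z hz
    have hUW : DifferentiableAt ℂ (fun z => U (U^[n] z)) z :=
      DifferentiableAt.comp z (hUdiff _ (lt_of_le_of_lt (hiter_mem n z hz.le) hrr₂)) hWz
    rw [hd]
    exact ((hUW.sub (hWz.const_mul _)).div_const _)
  have hFdiff : ∀ N, DifferentiableOn ℂ (fun z => z + ∑ n ∈ Finset.range N, d n z)
      (ball (0:ℂ) r) := by
    intro N
    apply DifferentiableOn.add differentiableOn_id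
    intro z hz
    rw [mem_ball, dist_zero_right] at hz
    apply DifferentiableAt.differentiableWithinAt
    exact DifferentiableAt.fun_sum (fun n _ => hddiff n z hz)
  -- h is analytic at 0
  have hdiffh : DifferentiableOn ℂ h (ball (0:ℂ) r) :=
    (hFtend.mono ball_subset_closedBall).tendstoLocallyUniformlyOn.differentiableOn
      (Eventually.of_forall hFdiff) isOpen_ball
  have hanal : AnalyticAt ℂ h 0 := hdiffh.analyticAt (ball_mem_nhds _ hr)
  -- h 0 = 0
  have hW0 : ∀ n : ℕ, U^[n] (0:ℂ) = 0 := fun n => Function.iterate_fixed hU0 n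
  have hd0 : ∀ n, d n 0 = 0 := by
    intro n
    rw [hd]
    simp [hW0, hU0]
  have hh0 : h 0 = 0 := by
    rw [hhdef]
    simp only
    rw [tsum_congr hd0]
    simp
  -- derivative of h at 0
  have hgeom : Summable (fun n : ℕ => (c^2/l) ^ n) :=
    summable_geometric_of_lt_one (by positivity) (by rwa [div_lt_one hl0])
  have htsumgeom : ∑' n : ℕ, (c^2/l) ^ n = (1 - c^2/l)⁻¹ :=
    tsum_geometric_of_lt_one (by positivity) (by rwa [div_lt_one hl0])
  have hKbound : ∀ z : ℂ, ‖z‖ ≤ r →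
      ‖h z - z‖ ≤ (M / l * (1 - c^2/l)⁻¹) * ‖z‖ ^ 2 := by
    intro z hz
    have hsumz : Summable (fun n => ‖d n z‖) :=
      Summable.of_nonneg_of_le (fun n => norm_nonneg _) (fun n => hdb' n z hz)
        (hgeom.mul_left _)
    have e1 : h z - z = ∑' n, d n z := by rw [hhdef]; ring
    rw [e1]
    calc ‖∑' n, d n z‖ ≤ ∑' n, ‖d n z‖ := norm_tsum_le_tsum_norm hsumz
      _ ≤ ∑' n : ℕ, (M * ‖z‖ ^ 2 / l) * (c^2/l) ^ n :=
          Summable.tsum_le_tsum (fun n => hdb' n z hz) hsumz (hgeom.mul_left _)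
      _ = (M * ‖z‖ ^ 2 / l) * ∑' n : ℕ, (c^2/l) ^ n := tsum_mul_left
      _ = (M / l * (1 - c^2/l)⁻¹) * ‖z‖ ^ 2 := by rw [htsumgeom]; ring
  have hder : HasDerivAt h 1 0 := by
    rw [hasDerivAt_iff_isLittleO]
    have hbig : (fun z : ℂ => h z - h 0 - (z - 0) • (1:ℂ)) =O[𝓝 0] (fun z => ‖z‖ ^ 2) := by
      rw [Asymptotics.isBigO_iff]
      refine ⟨M / l * (1 - c^2/l)⁻¹, ?_⟩
      rw [Metric.eventually_nhds_iff]
      refine ⟨r, hr, fun {z} hz => ?_⟩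
      rw [dist_zero_right] at hz
      simp only [hh0, sub_zero, smul_eq_mul, mul_one]
      calc ‖h z - z‖ ≤ (M / l * (1 - c^2/l)⁻¹) * ‖z‖ ^ 2 := hKbound z hz.le
        _ ≤ (M / l * (1 - c^2/l)⁻¹) * ‖(‖z‖ ^ 2 : ℝ)‖ := by
            rw [Real.norm_of_nonneg (by positivity)]
    have hlit : (fun z : ℂ => ‖z‖ ^ 2) =o[𝓝 0] (fun z : ℂ => z - 0) := by
      simpa using Asymptotics.isLittleO_norm_pow_id (E' := ℂ) (one_lt_two)
    exact hbig.trans_isLittleO hlit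
  have hderiv1 : deriv h 0 = 1 := hder.deriv
  -- conjugation symmetry
  have hWc : ∀ (n : ℕ) (z : ℂ), U^[n] (conj z) = conj (U^[n] z) := by
    intro n
    induction n with
    | zero => intro z; simp
    | succ n ih =>
      intro z
      rw [Function.iterate_succ_apply', Function.iterate_succ_apply', ih, hUc]
  have hdc : ∀ (n : ℕ) (z : ℂ), d n (conj z) = conj (d n z) := by
    intro n z
    rw [hd]
    simp only
    rw [hWc, hUc, map_div₀, map_sub, map_mul, map_pow, Complex.conj_ofReal]
  have hhc : ∀ z, h (conj z) = conj (h z) := by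
    intro z
    rw [hhdef]
    simp only
    rw [tsum_congr (fun n => hdc n z), ← Complex.conj_tsum, ← map_add]
  -- Schroeder equation
  have hshift : ∀ (n : ℕ) (w : ℂ), d n (U w) = ((l:ℝ):ℂ) * d (n+1) w := by
    intro n w
    rw [hd]
    simp only [← Function.iterate_succ_apply]
    rw [pow_succ]
    field_simp
    ring
  have hsch : ∀ᶠ z in 𝓝 (0:ℂ), h (U z) = ((l:ℝ):ℂ) * h z := by
    filter_upwards [closedBall_mem_nhds (0:ℂ) hr] with z hz
    have hz' : ‖z‖ ≤ r := by rwa [mem_closedBall, dist_zero_right] at hz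
    have hUz : U z ∈ closedBall (0:ℂ) r := by
      rw [mem_closedBall, dist_zero_right]
      exact le_trans (hcontr z hz') (by nlinarith [norm_nonneg z])
    have t1 : Filter.Tendsto (fun N => U z + ∑ n ∈ Finset.range N, d n (U z))
        atTop (𝓝 (h (U z))) := hFtend.tendsto_at hUz
    have hd0z : ((l:ℝ):ℂ) * d 0 z = U z - ((l:ℝ):ℂ) * z := by
      rw [hd]
      simp only [Function.iterate_zero, id_eq, pow_one]
      field_simp
      ring
    have keyN : ∀ N, U z + ∑ n ∈ Finset.range N, d n (U z) =
        ((l:ℝ):ℂ) * (z + ∑ n ∈ Finset.range (N+1), d n z) := by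
      intro N
      have e1 : ∑ n ∈ Finset.range N, d n (U z)
          = ((l:ℝ):ℂ) * ∑ n ∈ Finset.range N, d (n+1) z := by
        rw [Finset.mul_sum]
        exact Finset.sum_congr rfl fun n _ => hshift n z
      have e2 : ∑ n ∈ Finset.range (N+1), d n z
          = (∑ n ∈ Finset.range N, d (n+1) z) + d 0 z := Finset.sum_range_succ' _ _
      rw [e1, e2]
      rw [mul_add, mul_add, hd0z]
      ring
    have t2 : Filter.Tendsto
        (fun N => ((l:ℝ):ℂ) * (z + ∑ n ∈ Finset.range (N+1), d n z))
        atTop (𝓝 (((l:ℝ):ℂ) * h z)) := by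
      have hzmem : z ∈ closedBall (0:ℂ) r := hz
      have t3 := (hFtend.tendsto_at hzmem).comp (tendsto_add_atTop_nat 1)
      exact t3.const_mul _
    exact tendsto_nhds_unique (t1.congr keyN) t2
  exact ⟨h, hanal, hh0, hderiv1, hhc, hsch⟩




lemma stmt10_inverse (h : ℂ → ℂ) (hA : AnalyticAt ℂ h 0) (h0 : h 0 = 0)
    (hd : deriv h 0 = 1) (hc : ∀ z, h (conj z) = conj (h z)) :
    ∃ H : ℂ → ℂ, AnalyticAt ℂ H 0 ∧ H 0 = 0 ∧ ContinuousAt H 0 ∧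
      (∀ᶠ z in 𝓝 (0:ℂ), H (h z) = z) ∧ (∀ᶠ w in 𝓝 (0:ℂ), h (H w) = w) ∧
      (∀ᶠ w in 𝓝 (0:ℂ), H (conj w) = conj (H w)) := by
  obtain ⟨q, hq⟩ := hA
  have hc1 : q 1 (fun _ => (1:ℂ)) = 1 := by
    have := hq.deriv
    rw [hd] at this
    exact this.symm
  have hsd : HasStrictDerivAt h 1 0 := by
    have := hq.hasStrictDerivAt
    rwa [hc1] at this
  set i : ℂ ≃L[ℂ] ℂ := ContinuousLinearEquiv.unitsEquivAut ℂ (Units.mk0 1 one_ne_zero) with hi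
  have hsF : HasStrictFDerivAt h (i : ℂ →L[ℂ] ℂ) 0 := hsd.hasStrictFDerivAt_equiv one_ne_zero
  set f := hsF.toOpenPartialHomeomorph h with hf
  have hfcoe : ⇑f = h := hsF.toOpenPartialHomeomorph_coe
  have hmem : (0:ℂ) ∈ f.source := hsF.mem_toOpenPartialHomeomorph_source
  have hp1 : q 1 = (continuousMultilinearCurryFin1 ℂ ℂ ℂ).symm (i : ℂ →L[ℂ] ℂ) := by
    have goal : (continuousMultilinearCurryFin1 ℂ ℂ ℂ) (q 1) = (i : ℂ →L[ℂ] ℂ) := by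
      apply ContinuousLinearMap.ext
      intro x
      have e1 : (continuousMultilinearCurryFin1 ℂ ℂ ℂ) (q 1) x = q 1 (fun _ => x) := by
        rw [continuousMultilinearCurryFin1_apply]
        congr 1
      have e2 : q 1 (fun _ => x) = x := by
        rw [FormalMultilinearSeries.apply_eq_pow_smul_coeff]
        have : q.coeff 1 = 1 := hc1
        rw [this]
        simp
      rw [e1, e2, hi]
      simp [ContinuousLinearEquiv.unitsEquivAut]
    rw [← goal]
    simp
  have hq' : HasFPowerSeriesAt (⇑f) q 0 := by rw [hfcoe]; exact hq
  have hsymm := f.hasFPowerSeriesAt_symm hmem hq' hp1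
  have hf0 : f 0 = 0 := by
    have : f 0 = h 0 := by rw [hfcoe]
    rw [this, h0]
  set H : ℂ → ℂ := ⇑f.symm with hH
  have HA : AnalyticAt ℂ H 0 := by
    rw [hf0] at hsymm
    exact ⟨_, hsymm⟩
  have hH0 : H 0 = 0 := by
    have := f.left_inv hmem
    rw [hf0] at this
    exact this
  have hHcont : ContinuousAt H 0 := HA.continuousAt
  have hleft : ∀ᶠ z in 𝓝 (0:ℂ), H (h z) = z := by
    filter_upwards [f.eventually_left_inverse hmem] with z hz
    rw [← hfcoe]
    exact hz
  have hright : ∀ᶠ w in 𝓝 (0:ℂ), h (H w) = w := by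
    have := f.eventually_right_inverse' hmem
    rw [hf0] at this
    filter_upwards [this] with w hw
    rw [← hfcoe]
    exact hw
  have hsrc : ∀ᶠ w in 𝓝 (0:ℂ), H w ∈ f.source := by
    apply hHcont.eventually_mem
    rw [hH0]
    exact f.open_source.mem_nhds hmem
  have hconjH : ∀ᶠ w in 𝓝 (0:ℂ), H (conj w) = conj (H w) := by
    have hcc : ContinuousAt (fun w : ℂ => conj (H (conj w))) 0 := by
      apply Complex.continuous_conj.continuousAt.comp
      apply ContinuousAt.comp
      · show ContinuousAt H ((starRingEnd ℂ) 0)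
        rw [map_zero]
        exact hHcont
      · exact Complex.continuous_conj.continuousAt
    have hGC0 : conj (H (conj (0:ℂ))) = 0 := by
      rw [map_zero, hH0, map_zero]
    have hsrcG : ∀ᶠ w in 𝓝 (0:ℂ), conj (H (conj w)) ∈ f.source := by
      apply hcc.eventually_mem
      rw [hGC0]
      exact f.open_source.mem_nhds hmem
    have hrc : ∀ᶠ w in 𝓝 (0:ℂ), h (H (conj w)) = conj w := by
      have ht : Filter.Tendsto (fun w : ℂ => conj w) (𝓝 0) (𝓝 0) := by
        have := Complex.continuous_conj.tendsto (0:ℂ)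
        rwa [map_zero] at this
      exact ht.eventually hright
    filter_upwards [hright, hrc, hsrc, hsrcG] with w e1 e2 e3 e4
    have e5 : f (conj (H (conj w))) = f (H w) := by
      rw [hfcoe]
      calc h (conj (H (conj w))) = conj (h (H (conj w))) := hc _
        _ = conj (conj w) := by rw [e2]
        _ = w := Complex.conj_conj w
        _ = h (H w) := e1.symm
    have e6 := f.injOn e4 e3 e5
    calc H (conj w) = conj (conj (H (conj w))) := (Complex.conj_conj _).symm
      _ = conj (H w) := by rw [e6]
  exact ⟨H, HA, hH0, hHcont, hleft, hright, hconjH⟩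



open Filter

/-- If `u` is real-analytic at `0` with `u 0 = 0` and multiplier `0 < u'(0) < 1`, then
the analytic iteration problem for `u` is solvable: there is a one-parameter family `φᵗ`
of analytic germs fixing `0`, with `φ⁰ = id`, `φ¹ = u`, and `φ^{t+s} = φᵗ ∘ φˢ` near `0`. -/
theorem stmt10 (u : ℝ → ℝ) (hu : AnalyticAt ℝ u 0) (hu0 : u 0 = 0)
    (h1 : 0 < deriv u 0) (h2 : deriv u 0 < 1) :
    ∃ φ : ℝ → (ℝ → ℝ),
      (∀ t : ℝ, AnalyticAt ℝ (φ t) 0) ∧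
      (∀ t : ℝ, φ t 0 = 0) ∧
      (∀ᶠ x in nhds (0 : ℝ), φ 0 x = x) ∧
      (∀ᶠ x in nhds (0 : ℝ), φ 1 x = u x) ∧
      (∀ s t : ℝ, ∀ᶠ x in nhds (0 : ℝ), φ (t + s) x = φ t (φ s x)) := by
  obtain ⟨U, hUA, hU0, hUd, hUc, hUreal⟩ := stmt10_complexify u hu hu0
  set l : ℝ := deriv u 0 with hldef
  obtain ⟨h, hhA, hh0, hhd, hhc, hsch⟩ := stmt10_koenigs U l h1 h2 hUA hU0 hUd hUc
  obtain ⟨H, HA, hH0, hHcont, hleft, hright, hHconj⟩ := stmt10_inverse h hhA hh0 hhd hhc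
  have hhcont : ContinuousAt h 0 := hhA.continuousAt
  have hUcont : ContinuousAt U 0 := hUA.continuousAt
  -- the family
  refine ⟨fun t x => (H (((l ^ t : ℝ) : ℂ) * h ((x : ℝ) : ℂ))).re, ?_, ?_, ?_, ?_, ?_⟩
  · -- analyticity
    intro t
    have A0 : AnalyticAt ℝ (fun x : ℝ => ((x : ℝ) : ℂ)) 0 :=
      Complex.ofRealCLM.analyticAt 0
    have A1 : AnalyticAt ℝ (fun z : ℂ => ((l ^ t : ℝ) : ℂ) * h z)
        ((fun x : ℝ => ((x : ℝ) : ℂ)) 0) := by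
      have : AnalyticAt ℂ (fun z : ℂ => ((l ^ t : ℝ) : ℂ) * h z) 0 :=
        analyticAt_const.mul hhA
      simpa using this.restrictScalars
    have B1 : AnalyticAt ℝ (fun x : ℝ => ((l ^ t : ℝ) : ℂ) * h ((x : ℝ) : ℂ)) 0 :=
      A1.comp A0
    have A2 : AnalyticAt ℝ H ((fun x : ℝ => ((l ^ t : ℝ) : ℂ) * h ((x : ℝ) : ℂ)) 0) := by
      have : AnalyticAt ℝ H 0 := HA.restrictScalars
      simpa [hh0] using this
    have B2 : AnalyticAt ℝ (fun x : ℝ => H (((l ^ t : ℝ) : ℂ) * h ((x : ℝ) : ℂ))) 0 :=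
      AnalyticAt.comp (g := H)
        (f := fun x : ℝ => ((l ^ t : ℝ) : ℂ) * h ((x : ℝ) : ℂ)) A2 B1
    have A3 : AnalyticAt ℝ (fun z : ℂ => z.re)
        ((fun x : ℝ => H (((l ^ t : ℝ) : ℂ) * h ((x : ℝ) : ℂ))) 0) := by
      have := Complex.reCLM.analyticAt
        ((fun x : ℝ => H (((l ^ t : ℝ) : ℂ) * h ((x : ℝ) : ℂ))) 0)
      exact this
    exact AnalyticAt.comp (g := fun z : ℂ => z.re)
      (f := fun x : ℝ => H (((l ^ t : ℝ) : ℂ) * h ((x : ℝ) : ℂ))) A3 B2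
  · -- fixes 0
    intro t
    simp [hh0, hH0]
  · -- t = 0 is the identity
    have E0 : ∀ᶠ x : ℝ in 𝓝 0, H (h ((x : ℝ) : ℂ)) = ((x : ℝ) : ℂ) := by
      apply stmt10_pullback (g := fun x : ℝ => ((x : ℝ) : ℂ))
        Complex.continuous_ofReal.continuousAt Complex.ofReal_zero hleft
    filter_upwards [E0] with x hx
    rw [Real.rpow_zero]
    push_cast
    rw [one_mul, hx, Complex.ofReal_re]
  · -- t = 1 is u
    have cU : ContinuousAt (fun x : ℝ => U ((x : ℝ) : ℂ)) 0 := by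
      apply ContinuousAt.comp
      · show ContinuousAt U (((0:ℝ) : ℝ) : ℂ)
        simpa using hUcont
      · exact Complex.continuous_ofReal.continuousAt
    have cU0 : (fun x : ℝ => U ((x : ℝ) : ℂ)) 0 = 0 := by simp [hU0]
    have E1 : ∀ᶠ x : ℝ in 𝓝 0, h (U ((x : ℝ) : ℂ)) = ((l : ℝ) : ℂ) * h ((x : ℝ) : ℂ) :=
      stmt10_pullback Complex.continuous_ofReal.continuousAt Complex.ofReal_zero hsch
    have E2 : ∀ᶠ x : ℝ in 𝓝 0, H (h (U ((x : ℝ) : ℂ))) = U ((x : ℝ) : ℂ) :=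
      stmt10_pullback cU cU0 hleft
    filter_upwards [E1, E2, hUreal] with x e1 e2 e3
    rw [Real.rpow_one, ← e1, e2, e3, Complex.ofReal_re]
  · -- group law
    intro s t
    have ch : ContinuousAt (fun x : ℝ => h ((x : ℝ) : ℂ)) 0 := by
      apply ContinuousAt.comp
      · show ContinuousAt h (((0:ℝ) : ℝ) : ℂ)
        simpa using hhcont
      · exact Complex.continuous_ofReal.continuousAt
    have cf : ContinuousAt (fun x : ℝ => ((l ^ s : ℝ) : ℂ) * h ((x : ℝ) : ℂ)) 0 :=
      continuousAt_const.mul ch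
    have cf0 : (fun x : ℝ => ((l ^ s : ℝ) : ℂ) * h ((x : ℝ) : ℂ)) 0 = 0 := by
      simp [hh0]
    have hconj2 : ∀ᶠ w in 𝓝 (0:ℂ), conj (H w) = H (conj w) :=
      hHconj.mono fun w hw => hw.symm
    have Rs : ∀ᶠ x : ℝ in 𝓝 0,
        (((H (((l ^ s : ℝ) : ℂ) * h ((x : ℝ) : ℂ))).re : ℝ) : ℂ)
          = H (((l ^ s : ℝ) : ℂ) * h ((x : ℝ) : ℂ)) := by
      filter_upwards [stmt10_pullback cf cf0 hconj2] with x hx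
      rw [← Complex.conj_eq_iff_re, hx]
      congr 1
      rw [map_mul, Complex.conj_ofReal]
      congr 1
      rw [← hhc, Complex.conj_ofReal]
    have EhH : ∀ᶠ x : ℝ in 𝓝 0,
        h (H (((l ^ s : ℝ) : ℂ) * h ((x : ℝ) : ℂ))) = ((l ^ s : ℝ) : ℂ) * h ((x : ℝ) : ℂ) :=
      stmt10_pullback cf cf0 hright
    filter_upwards [Rs, EhH] with x hx hhx
    have e : ((l ^ t : ℝ) : ℂ) *
          h ((((H (((l ^ s : ℝ) : ℂ) * h ((x : ℝ) : ℂ))).re : ℝ)) : ℂ)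
        = ((l ^ (t + s) : ℝ) : ℂ) * h ((x : ℝ) : ℂ) := by
      rw [hx, hhx, Real.rpow_add h1, Complex.ofReal_mul, mul_assoc]
    rw [e]
end

section
/- Let u ∈ ℂ[[z]] be a formal power series with zero constant coefficient and linear coefficient equal to 1 (multiplier λ = 1). Then there exists a formal power series g ∈ ℂ[[z]] with zero constant coefficient and linear coefficient 1 such that g(g(z)) = u(z); i.e., the iteration problem at multiplier 1 always has a formal square root solution. -/
open PowerSeries Finset

namespace SqRootAux

lemma coeff_substComp (g f : PowerSeries ℂ) (n : ℕ) :
    coeff n (g.substComp f) =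
      ∑ k ∈ range (n + 1), coeff k f * coeff n (g ^ k) := by
  rw [PowerSeries.substComp, coeff_mk, trunc_apply, ← Finset.range_eq_Ico, map_sum, map_sum]
  refine Finset.sum_congr rfl fun k hk => ?_
  rw [Polynomial.aeval_monomial, PowerSeries.algebraMap_apply]
  simp [coeff_C_mul]

lemma coeff_pow_congr {g h : PowerSeries ℂ} {n : ℕ}
    (hgh : ∀ k ≤ n, coeff k g = coeff k h) (j : ℕ) :
    ∀ k ≤ n, coeff k (g ^ j) = coeff k (h ^ j) := by
  induction j with
  | zero => intro k hk; simp
  | succ j ih =>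
    intro k hk
    rw [pow_succ, pow_succ, coeff_mul, coeff_mul]
    refine Finset.sum_congr rfl fun p hp => ?_
    rw [Finset.HasAntidiagonal.mem_antidiagonal] at hp
    rw [ih p.1 (by omega), hgh p.2 (by omega)]

lemma coeff_substComp_congr {g h : PowerSeries ℂ} {n : ℕ}
    (hgh : ∀ k ≤ n, coeff k g = coeff k h) :
    coeff n (g.substComp g) = coeff n (h.substComp h) := by
  rw [coeff_substComp, coeff_substComp]
  refine Finset.sum_congr rfl fun k hk => ?_
  rw [Finset.mem_range] at hk
  rw [hgh k (by omega), coeff_pow_congr hgh k n le_rfl]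

lemma coeff_pow_eq_zero {g : PowerSeries ℂ} (hg : constantCoeff g = 0)
    {m k : ℕ} (h : m < k) : coeff m (g ^ k) = 0 :=
  X_pow_dvd_iff.mp (pow_dvd_pow_of_dvd (X_dvd_iff.mpr hg) k) m h

lemma coeff_pow_self {g : PowerSeries ℂ} (hg : constantCoeff g = 0) (n : ℕ) :
    coeff n (g ^ n) = (coeff 1 g) ^ n := by
  induction n with
  | zero => simp
  | succ n ih =>
    rw [pow_succ, coeff_mul, Finset.sum_eq_single (n, 1)]
    · rw [ih, pow_succ]
    · intro b hb hne
      rw [Finset.HasAntidiagonal.mem_antidiagonal] at hb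
      rcases lt_or_ge b.1 n with h1 | h1
      · rw [coeff_pow_eq_zero hg h1, zero_mul]
      · have hb2 : b.2 = 0 := by
          rcases Nat.lt_or_ge n b.1 with h2 | h2
          · omega
          · exfalso; apply hne
            have : b.1 = n := le_antisymm h2 h1
            have : b.2 = 1 := by omega
            exact Prod.ext (by omega) this
        have : coeff b.2 g = 0 := by
          rw [hb2, coeff_zero_eq_constantCoeff]; exact hg
        rw [this, mul_zero]
    · intro h
      exfalso; exact h (Finset.HasAntidiagonal.mem_antidiagonal.mpr rfl)

lemma coeff_perturb (g : PowerSeries ℂ) (c : ℂ) (n k : ℕ) :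
    coeff k (g + C c * X ^ n) = coeff k g + if k = n then c else 0 := by
  rw [map_add, coeff_C_mul, coeff_X_pow, mul_ite, mul_one, mul_zero]

lemma coeff_perturb_pow {g : PowerSeries ℂ} (hg : constantCoeff g = 0)
    {n : ℕ} (hn : 1 ≤ n) (c : ℂ) (k : ℕ) :
    coeff n ((g + C c * X ^ n) ^ k) =
      coeff n (g ^ k) + if k = 1 then c else 0 := by
  set h := g + C c * X ^ n with hh
  have hagree : ∀ j ≤ n - 1, coeff j g = coeff j h := by
    intro j hj
    rw [hh, coeff_perturb, if_neg (by omega), add_zero]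
  have hconst : constantCoeff h = 0 := by
    rw [hh, map_add, map_mul, constantCoeff_C]
    simp [hg, constantCoeff_X, zero_pow (by omega : n ≠ 0)]
  induction k with
  | zero => simp
  | succ k ih =>
    rw [pow_succ', pow_succ', hh, add_mul, map_add, mul_assoc,
      coeff_C_mul]
    have hX : coeff n (X ^ n * (g + C c * X ^ n) ^ k) =
        (if k = 0 then (1:ℂ) else 0) := by
      have := coeff_X_pow_mul ((g + C c * X ^ n) ^ k) n 0
      rw [zero_add] at this
      rw [this, coeff_zero_eq_constantCoeff, map_pow, hconst]
      rcases Nat.eq_zero_or_pos k with hk | hk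
      · simp [hk]
      · rw [zero_pow (by omega), if_neg (by omega)]
    have hmul : coeff n (g * (g + C c * X ^ n) ^ k) =
        coeff n (g * g ^ k) := by
      rw [coeff_mul, coeff_mul]
      refine Finset.sum_congr rfl fun p hp => ?_
      rw [Finset.HasAntidiagonal.mem_antidiagonal] at hp
      rcases Nat.lt_or_ge p.2 n with h2 | h2
      · rw [coeff_pow_congr (g := g) (h := g + C c * X ^ n) (n := n - 1)
          hagree k p.2 (by omega)]
      · have hp1 : p.1 = 0 := by omega
        rw [hp1, coeff_zero_eq_constantCoeff, hg, zero_mul, zero_mul]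
    rw [hX, hmul, ← pow_succ']
    rcases Nat.eq_zero_or_pos k with hk | hk
    · subst hk; simp
    · rw [if_neg (by omega), if_neg (by omega), mul_zero, add_zero]

lemma substComp_perturb {g : PowerSeries ℂ} (hg0 : constantCoeff g = 0)
    (hg1 : coeff 1 g = 1) {n : ℕ} (hn : 2 ≤ n) (c : ℂ) :
    coeff n ((g + C c * X ^ n).substComp (g + C c * X ^ n)) =
      coeff n (g.substComp g) + 2 * c := by
  rw [coeff_substComp, coeff_substComp]
  have key : ∀ k ∈ range (n + 1),
      coeff k (g + C c * X ^ n) * coeff n ((g + C c * X ^ n) ^ k) =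
      coeff k g * coeff n (g ^ k)
        + ((if k = n then c * coeff n (g ^ k) else 0)
          + (coeff k g * (if k = 1 then c else 0)
            + (if k = n then c else 0) * (if k = 1 then c else 0))) := by
    intro k hk
    rw [coeff_perturb, coeff_perturb_pow hg0 (by omega) c k]
    have hn1 : n ≠ 1 := by omega
    rcases eq_or_ne k n with h | h
    · simp [h, hn1]; ring
    · simp [h]; split_ifs <;> ring
  rw [Finset.sum_congr rfl key, Finset.sum_add_distrib, Finset.sum_add_distrib,
    Finset.sum_add_distrib, Finset.sum_ite_eq' (range (n+1)) n
      (fun k => c * coeff n (g ^ k))]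
  have e2 : ∑ k ∈ range (n + 1), coeff k g * (if k = 1 then c else 0) =
      coeff 1 g * c := by
    have : ∀ k ∈ range (n+1), coeff k g * (if k = 1 then c else 0) =
        if k = 1 then coeff k g * c else 0 := by
      intro k _; split <;> simp
    rw [Finset.sum_congr rfl this, Finset.sum_ite_eq' (range (n+1)) 1
      (fun k => coeff k g * c), if_pos (by simp; omega)]
  have e3 : ∑ k ∈ range (n + 1),
      (if k = n then c else 0) * (if k = 1 then c else 0) = 0 := by
    refine Finset.sum_eq_zero fun k _ => ?_
    rcases eq_or_ne k n with h | h
    · subst h; rw [if_neg (show ¬ k = 1 by omega), mul_zero]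
    · rw [if_neg h, zero_mul]
  rw [e2, e3, if_pos (by simp), coeff_pow_self hg0, hg1, one_pow, mul_one,
    one_mul, add_zero]
  ring

noncomputable def appr (u : PowerSeries ℂ) : ℕ → PowerSeries ℂ
  | 0 => 0
  | 1 => X
  | (n + 2) =>
      appr u (n + 1) +
        C ((coeff (n + 2) u -
          coeff (n + 2) ((appr u (n + 1)).substComp (appr u (n + 1)))) / 2) *
          X ^ (n + 2)

lemma appr_const (u : PowerSeries ℂ) : ∀ n, constantCoeff (appr u n) = 0
  | 0 => by simp [appr]
  | 1 => by simp [appr, constantCoeff_X]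
  | (n + 2) => by
      rw [appr, map_add, appr_const u (n + 1), map_mul, constantCoeff_C, map_pow,
        constantCoeff_X, zero_pow (by omega : n + 2 ≠ 0), mul_zero, add_zero]

lemma appr_one (u : PowerSeries ℂ) : ∀ n, 1 ≤ n → coeff 1 (appr u n) = 1
  | 1, _ => by simp [appr]
  | (n + 2), _ => by
      rw [appr, coeff_perturb, if_neg (by omega), add_zero, appr_one u (n + 1) (by omega)]

lemma appr_succ_coeff (u : PowerSeries ℂ) (k n : ℕ) (h : k ≤ n) :
    coeff k (appr u (n + 1)) = coeff k (appr u n) := by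
  match n with
  | 0 =>
    interval_cases k
    simp [appr, coeff_zero_eq_constantCoeff, constantCoeff_X]
  | (m + 1) =>
    rw [show m + 1 + 1 = m + 2 from rfl, appr, coeff_perturb, if_neg (by omega), add_zero]

lemma coeff_mkg (u : PowerSeries ℂ) (k n : ℕ) (h : k ≤ n) :
    coeff k (appr u n) = coeff k (appr u k) := by
  induction n with
  | zero => interval_cases k; rfl
  | succ n ih =>
    rcases Nat.lt_or_ge k (n + 1) with h' | h'
    · rw [appr_succ_coeff u k n (by omega), ih (by omega)]
    · have : k = n + 1 := by omega
      subst this; rfl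

end SqRootAux

open SqRootAux in
/-- Every formal power series `u` with zero constant coefficient and multiplier `1`
has a formal iterative square root with multiplier `1`. -/
theorem stmt11 (u : PowerSeries ℂ) (hu0 : PowerSeries.constantCoeff u = 0)
    (hu1 : PowerSeries.coeff 1 u = 1) :
    ∃ g : PowerSeries ℂ, PowerSeries.constantCoeff g = 0 ∧
      PowerSeries.coeff 1 g = 1 ∧ PowerSeries.substComp g g = u := by
  refine ⟨PowerSeries.mk fun k => coeff k (appr u k), ?_, ?_, ?_⟩
  · rw [← coeff_zero_eq_constantCoeff, coeff_mk]
    simp [appr]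
  · rw [coeff_mk]; simp [appr]
  · set g := PowerSeries.mk fun k => coeff k (appr u k) with hgdef
    have hgcoeff : ∀ n, ∀ k ≤ n, coeff k g = coeff k (appr u n) := by
      intro n k hk
      rw [hgdef, coeff_mk, coeff_mkg u k n hk]
    have hg0 : constantCoeff g = 0 := by
      rw [← coeff_zero_eq_constantCoeff, hgcoeff 0 0 le_rfl]; simp [appr]
    have hg1 : coeff 1 g = 1 := by
      rw [hgcoeff 1 1 le_rfl]; simp [appr]
    ext n
    rcases n with _ | _ | m
    · rw [coeff_substComp, Finset.sum_range_one, pow_zero, coeff_zero_eq_constantCoeff,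
        hg0, hu0, zero_mul]
    · simp [coeff_substComp, Finset.sum_range_succ, Finset.sum_range_one,
        coeff_zero_eq_constantCoeff, hg0, hg1, hu1]
    · set n := m + 2 with hn
      rw [coeff_substComp_congr (hgcoeff n)]
      have h0 : constantCoeff (appr u (m + 1)) = 0 := appr_const u (m + 1)
      have h1 : coeff 1 (appr u (m + 1)) = 1 := appr_one u (m + 1) (by omega)
      rw [show appr u n = appr u (m + 1) +
        C ((coeff n u -
          coeff n ((appr u (m + 1)).substComp (appr u (m + 1)))) / 2) *
          X ^ n from rfl]
      rw [substComp_perturb h0 h1 (by omega)]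
      ring
end
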